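/- arXiv:2103.00664 — 14 statements merged into one kernel-verified Lean document; each statement's English description precedes it below -/
import Mathlib

section
/- Let q be a prime power, d a positive divisor of q−1, ω a primitive root of F_q, m := (q−1)/d, and C the index d subgroup of F_qˣ. The map β : C × {0,…,d−1} → F_qˣ, (c,i) ↦ c·ω^i, is a bijection, and for every permutation σ of C × {0,…,d−1} the following are equivalent: (i) there exist a permutation ψ of {0,…,d−1}, integers s_0,…,s_{d−1} each coprime to m, and elements b_0,…,b_{d−1} ∈ C such that σ(c,i) = (b_{ψ(i)}·c^{s_{ψ(i)}}, ψ(i)) for all c ∈ C and all i ∈ {0,…,d−1}; (ii) there exist a tuple a = (a_0,…,a_{d−1}) ∈ F_q^d and a tuple r = (r_0,…,r_{d−1}) of integers with 1 ≤ r_i ≤ m such that f_ω(a,r) is an index d generalized cyclotomic permutation of F_q and β(σ(c,i)) = f_ω(a,r)(β(c,i)) for all c ∈ C and all i. In other words, conjugation by β maps the imprimitive wreath product Hol(C) ≀ Sym(d) acting on C × {0,…,d−1} exactly onto the group of restrictions to F_qˣ of the index d generalized cyclotomic permutations of F_q. -/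
/-!
Every unit is uniquely `c * ω ^ i` with `c ^ m = 1` and `i < d`. A wreath-product element
acts on the coset `C_i` by `c ω^i ↦ b c^s ω^(ψ i)`; since `c ^ s = c ^ r` on `C` for the
representative `1 ≤ r ≤ m` of `s` modulo `m`, this is `x ↦ A_i x^r` with
`A_i = b ω^(ψ i) ω^(-i r)`, and extending the conjugated permutation by `0 ↦ 0` gives a
generalized cyclotomic permutation. Conversely, a cyclotomic permutation sends `c ω^i` to
`A_i ω^(i r_i) c^(r_i)`; writing `A_i ω^(i r_i) = b_i ω^(ψ i)` puts `σ` in wreath form, `ψ` is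
onto because `σ` is, and `c ↦ c^(r_i)` is injective on the cyclic group `C` of order `m`,
which forces `gcd(r_i, m) = 1`.
-/

/-- `IsGCM ω d m a r f` says that `f : F → F` is the index `d` generalized cyclotomic
mapping `f_ω(a,r)` of the finite field `F`: `f 0 = 0`, and `f x = a i * x ^ r i` whenever
the unit `x` lies in the coset `C_i = ω^i · C`, where `C = {x : Fˣ | x ^ m = 1}` is the
index `d` subgroup of `Fˣ` (membership of `x` in `C_i` being expressed by
`(x * (ω^i)⁻¹) ^ m = 1`). -/
def IsGCM {F : Type*} [Field F] (ω : Fˣ) (d m : ℕ)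
    (a : Fin d → F) (r : Fin d → ℕ) (f : F → F) : Prop :=
  f 0 = 0 ∧ ∀ (x : Fˣ) (i : Fin d), (x * (ω ^ (i : ℕ))⁻¹) ^ m = 1 →
    f (x : F) = a i * (x : F) ^ (r i)

theorem pos_of_card_eq_mul {α : Type*} [Finite α] [Nonempty α] {d m : ℕ}
    (hcard : Nat.card α = d * m) : 0 < d ∧ 0 < m :=
  CanonicallyOrderedAdd.mul_pos.1 (hcard ▸ Nat.card_pos)

theorem coprime_of_injOn_pow {M : Type*} [Monoid M] {y : M} {m r : ℕ} (hm : 0 < m)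
    (hy : orderOf y = m) (hinj : Set.InjOn (· ^ r) {x : M | x ^ m = 1}) : r.Coprime m := by
  set g := r.gcd m
  -- `y ^ (m / g)` and `1` have the same `r`-th power, so `y ^ (m / g) = 1`, forcing `g = 1`.
  have hgm : g ∣ m := Nat.gcd_dvd_right r m
  obtain ⟨u, hu⟩ : g ∣ r := Nat.gcd_dvd_left r m
  have hy_m : y ^ m = 1 := hy ▸ pow_orderOf_eq_one y
  have hz : y ^ (m / g) = 1 := by
    refine hinj (show (y ^ (m / g)) ^ m = 1 by rw [← pow_mul, mul_comm, pow_mul, hy_m, one_pow])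
      (one_pow m) ?_
    show (y ^ (m / g)) ^ r = 1 ^ r
    rw [one_pow, hu, ← pow_mul, ← mul_assoc, Nat.div_mul_cancel hgm, pow_mul, hy_m, one_pow]
  have hdvd : m ∣ m / g := by simpa only [hy] using orderOf_dvd_of_pow_eq_one hz
  have hg : 0 < g := Nat.gcd_pos_of_pos_right r hm
  have hle : m ≤ m / g := Nat.le_of_dvd (Nat.div_pos (Nat.le_of_dvd hm hgm) hg) hdvd
  by_contra hne
  exact (Nat.div_lt_self hm (by omega)).not_ge hle

theorem exists_pow_eq_zpow {G : Type*} [Group G] {m : ℕ} (hm : 0 < m) (s : ℤ) :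
    ∃ r : ℕ, 1 ≤ r ∧ r ≤ m ∧ ∀ c : G, c ^ m = 1 → c ^ s = c ^ r := by
  have hmod := Int.emod_nonneg (s - 1) (by omega : (m : ℤ) ≠ 0)
  refine ⟨((s - 1) % m).toNat + 1, by omega,
    by have := Int.emod_lt_of_pos (s - 1) (by omega : (0 : ℤ) < m); omega, fun c hc => ?_⟩
  rw [← zpow_natCast, Nat.cast_add_one, Int.toNat_of_nonneg hmod, zpow_add_one,
    ← zpow_eq_zpow_emod' _ hc, ← zpow_add_one, sub_add_cancel]

theorem bijective_of_perm_snd_eq {α ι : Type*} [Nonempty α] [Finite ι]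
    (σ : Equiv.Perm (α × ι)) {ψ : ι → ι} (hσ : ∀ a i, (σ (a, i)).2 = ψ i) :
    Function.Bijective ψ := by
  refine Finite.surjective_iff_bijective.1 fun j => ?_
  obtain ⟨⟨a, i⟩, hai⟩ := σ.surjective (Classical.arbitrary α, j)
  exact ⟨i, (hσ a i).symm.trans (congrArg Prod.snd hai)⟩

section Cyclic

variable {G : Type*} [CommGroup G] {ω : G} {d m : ℕ}

theorem eq_and_eq_of_mul_pow_eq (hord : orderOf ω = d * m) (hm : 0 < m) {c₁ c₂ : G}
    (hc₁ : c₁ ^ m = 1) (hc₂ : c₂ ^ m = 1) {i₁ i₂ : Fin d}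
    (h : c₁ * ω ^ (i₁ : ℕ) = c₂ * ω ^ (i₂ : ℕ)) : c₁ = c₂ ∧ i₁ = i₂ := by
  have hi : i₁ = i₂ := by
    have hpow : ω ^ ((i₁ : ℕ) * m) = ω ^ ((i₂ : ℕ) * m) := by
      simpa [mul_pow, hc₁, hc₂, pow_mul] using congrArg (· ^ m) h
    rw [pow_eq_pow_iff_modEq, hord] at hpow
    exact Fin.ext (Nat.ModEq.eq_of_lt_of_lt
      ((Nat.ModEq.mul_right_cancel_iff' hm.ne').1 hpow) i₁.2 i₂.2)
  subst hi
  exact ⟨mul_right_cancel h, rfl⟩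

theorem exists_monomial_of_wreath (hm : 0 < m)
    {σ : {x : G // x ^ m = 1} × Fin d → {x : G // x ^ m = 1} × Fin d}
    {ψ : Fin d → Fin d} {s : Fin d → ℤ} {b : Fin d → G}
    (hσ : ∀ c i, ((σ (c, i)).1 : G) = b i * (c : G) ^ s i ∧ (σ (c, i)).2 = ψ i) :
    ∃ (A : Fin d → G) (r : Fin d → ℕ), (∀ i, 1 ≤ r i ∧ r i ≤ m) ∧ ∀ c i,
      ((σ (c, i)).1 : G) * ω ^ ((σ (c, i)).2 : ℕ) =
        A i * ((c : G) * ω ^ (i : ℕ)) ^ r i := by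
  choose r hr₁ hr₂ hrs using fun i => exists_pow_eq_zpow (G := G) hm (s i)
  refine ⟨fun i => b i * ω ^ (ψ i : ℕ) * ((ω ^ (i : ℕ)) ^ r i)⁻¹, r,
    fun i => ⟨hr₁ i, hr₂ i⟩, fun c i => ?_⟩
  rw [(hσ c i).1, (hσ c i).2, hrs i c c.2, mul_pow, mul_comm (_ ^ r i), ← mul_assoc,
    inv_mul_cancel_right, mul_right_comm]

theorem bijective_mul_pow_of_card_eq [Finite G] (hω : ∀ x, x ∈ Subgroup.zpowers ω)
    (hcard : Nat.card G = d * m) :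
    Function.Bijective
      fun ci : {x : G // x ^ m = 1} × Fin d => (ci.1 : G) * ω ^ (ci.2 : ℕ) := by
  have hord : orderOf ω = d * m := (orderOf_eq_card_of_forall_mem_zpowers hω).trans hcard
  obtain ⟨hd, hm⟩ := pos_of_card_eq_mul hcard
  refine ⟨fun ⟨c₁, i₁⟩ ⟨c₂, i₂⟩ h => ?_, fun x => ?_⟩
  · obtain ⟨hc, hi⟩ := eq_and_eq_of_mul_pow_eq hord hm c₁.2 c₂.2 h
    exact Prod.ext (Subtype.ext hc) hi
  · obtain ⟨n, rfl⟩ := mem_powers_iff_mem_zpowers.2 (hω x)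
    have hC : (ω ^ (d * (n / d))) ^ m = 1 := by
      rw [← pow_mul, mul_right_comm, pow_mul, ← hord, pow_orderOf_eq_one, one_pow]
    exact ⟨(⟨_, hC⟩, ⟨n % d, Nat.mod_lt n hd⟩), by simp [← pow_add, Nat.div_add_mod]⟩

noncomputable def cosetEquiv [Finite G] (hω : ∀ x, x ∈ Subgroup.zpowers ω)
    (hcard : Nat.card G = d * m) : {x : G // x ^ m = 1} × Fin d ≃ G :=
  Equiv.ofBijective _ (bijective_mul_pow_of_card_eq hω hcard)

variable [Finite G]

@[simp]
theorem cosetEquiv_apply (hω : ∀ x, x ∈ Subgroup.zpowers ω) (hcard : Nat.card G = d * m)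
    (ci : {x : G // x ^ m = 1} × Fin d) :
    cosetEquiv hω hcard ci = (ci.1 : G) * ω ^ (ci.2 : ℕ) := rfl

theorem cosetEquiv_symm_apply (hω : ∀ x, x ∈ Subgroup.zpowers ω)
    (hcard : Nat.card G = d * m) {x : G} {i : Fin d} (hx : (x * (ω ^ (i : ℕ))⁻¹) ^ m = 1) :
    (cosetEquiv hω hcard).symm x = (⟨_, hx⟩, i) :=
  (cosetEquiv hω hcard).symm_apply_eq.2 (by simp)

theorem exists_fst_snd_of_monomial (hω : ∀ x, x ∈ Subgroup.zpowers ω)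
    (hcard : Nat.card G = d * m)
    (σ : {x : G // x ^ m = 1} × Fin d → {x : G // x ^ m = 1} × Fin d)
    (A : Fin d → G) (r : Fin d → ℕ)
    (h : ∀ c i,
      ((σ (c, i)).1 : G) * ω ^ ((σ (c, i)).2 : ℕ) = A i * ((c : G) * ω ^ (i : ℕ)) ^ r i) :
    ∃ (b : Fin d → {x : G // x ^ m = 1}) (ψ : Fin d → Fin d),
      ∀ c i, ((σ (c, i)).1 : G) = b i * (c : G) ^ r i ∧ (σ (c, i)).2 = ψ i := by
  have hord : orderOf ω = d * m := (orderOf_eq_card_of_forall_mem_zpowers hω).trans hcard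
  have hm : 0 < m := (pos_of_card_eq_mul hcard).2
  choose p hp using fun i => (cosetEquiv hω hcard).surjective (A i * ω ^ ((i : ℕ) * r i))
  refine ⟨fun i => (p i).1, fun i => (p i).2, fun c i => ?_⟩
  have hC : (((p i).1 : G) * (c : G) ^ r i) ^ m = 1 := by
    rw [mul_pow, (p i).1.2, pow_right_comm, c.2, one_pow, one_mul]
  refine eq_and_eq_of_mul_pow_eq hord hm (σ (c, i)).1.2 hC ?_
  rw [h, mul_right_comm, ← cosetEquiv_apply hω hcard (p i), hp, mul_pow, pow_mul]
  ac_rfl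

theorem coprime_of_perm_fst_eq (hω : ∀ x, x ∈ Subgroup.zpowers ω)
    (hcard : Nat.card G = d * m) (σ : Equiv.Perm ({x : G // x ^ m = 1} × Fin d))
    {b : Fin d → G} {r : Fin d → ℕ} {ψ : Fin d → Fin d}
    (hσ : ∀ c i, ((σ (c, i)).1 : G) = b i * (c : G) ^ r i ∧ (σ (c, i)).2 = ψ i)
    (i : Fin d) : (r i).Coprime m := by
  have hord : orderOf ω = d * m := (orderOf_eq_card_of_forall_mem_zpowers hω).trans hcard
  obtain ⟨hd, hm⟩ := pos_of_card_eq_mul hcard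
  have hωd : orderOf (ω ^ d) = m := by
    rw [orderOf_pow_of_dvd hd.ne' (hord ▸ dvd_mul_right d m), hord, Nat.mul_div_cancel_left m hd]
  refine coprime_of_injOn_pow hm hωd fun x hx y hy hxy => ?_
  have hσxy : σ (⟨x, hx⟩, i) = σ (⟨y, hy⟩, i) := by
    refine Prod.ext (Subtype.ext ?_) ((hσ _ i).2.trans (hσ _ i).2.symm)
    rw [(hσ _ i).1, (hσ _ i).1]
    exact congrArg (b i * ·) hxy
  exact congrArg (fun ci => (ci.1 : G)) (σ.injective hσxy)

theorem exists_wreath_of_monomial (hω : ∀ x, x ∈ Subgroup.zpowers ω)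
    (hcard : Nat.card G = d * m) (σ : Equiv.Perm ({x : G // x ^ m = 1} × Fin d))
    (A : Fin d → G) (r : Fin d → ℕ)
    (h : ∀ c i,
      ((σ (c, i)).1 : G) * ω ^ ((σ (c, i)).2 : ℕ) = A i * ((c : G) * ω ^ (i : ℕ)) ^ r i) :
    ∃ (ψ : Equiv.Perm (Fin d)) (s : Fin d → ℤ) (b : Fin d → {x : G // x ^ m = 1}),
      (∀ i, Int.gcd (s i) (m : ℤ) = 1) ∧ ∀ c i,
        ((σ (c, i)).1 : G) = (b (ψ i) : G) * (c : G) ^ s (ψ i) ∧ (σ (c, i)).2 = ψ i := by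
  obtain ⟨b, ψ, hσ⟩ := exists_fst_snd_of_monomial hω hcard σ A r h
  have : Nonempty {x : G // x ^ m = 1} := ⟨⟨1, one_pow m⟩⟩
  set ψ' := Equiv.ofBijective ψ (bijective_of_perm_snd_eq σ fun c i => (hσ c i).2)
  refine ⟨ψ', fun j => r (ψ'.symm j), fun j => b (ψ'.symm j), fun j => ?_, fun c i => ?_⟩
  · rw [Int.gcd_natCast_natCast]
    exact coprime_of_perm_fst_eq hω hcard σ hσ _
  · simpa [ψ'] using hσ c i

end Cyclic

section ExtendByZero

variable {G₀ : Type*} [GroupWithZero G₀]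

open scoped Classical in
noncomputable def extendByZero (τ : Equiv.Perm G₀ˣ) : Equiv.Perm G₀ where
  toFun x := if hx : x = 0 then 0 else τ (Units.mk0 x hx)
  invFun y := if hy : y = 0 then 0 else τ.symm (Units.mk0 y hy)
  left_inv x := by by_cases hx : x = 0 <;> simp [hx]
  right_inv y := by by_cases hy : y = 0 <;> simp [hy]

theorem extendByZero_zero (τ : Equiv.Perm G₀ˣ) : extendByZero τ 0 = 0 := by
  simp [extendByZero]

theorem extendByZero_coe (τ : Equiv.Perm G₀ˣ) (u : G₀ˣ) : extendByZero τ u = τ u := by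
  simp [extendByZero]

end ExtendByZero

theorem stmt0_general {F : Type*} [Field F] [Fintype F] (ω : Fˣ)
    (hω : ∀ x : Fˣ, x ∈ Subgroup.zpowers ω)
    (d m : ℕ) (hdm : d * m = Fintype.card F - 1) :
    Function.Bijective
      (fun ci : {x : Fˣ // x ^ m = 1} × Fin d => ((ci.1 : Fˣ) * ω ^ (ci.2 : ℕ))) ∧
    ∀ σ : Equiv.Perm ({x : Fˣ // x ^ m = 1} × Fin d),
      ((∃ (ψ : Equiv.Perm (Fin d)) (s : Fin d → ℤ) (b : Fin d → {x : Fˣ // x ^ m = 1}),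
          (∀ i, Int.gcd (s i) (m : ℤ) = 1) ∧
          ∀ (c : {x : Fˣ // x ^ m = 1}) (i : Fin d),
            ((σ (c, i)).1 : Fˣ) = (b (ψ i) : Fˣ) * (c : Fˣ) ^ (s (ψ i)) ∧
            (σ (c, i)).2 = ψ i)
       ↔
       (∃ (a : Fin d → F) (r : Fin d → ℕ), (∀ i, 1 ≤ r i ∧ r i ≤ m) ∧
          ∃ f : F → F, IsGCM ω d m a r f ∧ Function.Bijective f ∧
            ∀ (c : {x : Fˣ // x ^ m = 1}) (i : Fin d),
              ((((σ (c, i)).1 : Fˣ) * ω ^ (((σ (c, i)).2 : Fin d) : ℕ) : Fˣ) : F)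
                = f ((((c : Fˣ) * ω ^ (i : ℕ) : Fˣ)) : F))) := by
  have hcard : Nat.card Fˣ = d * m := by rw [Nat.card_units, Nat.card_eq_fintype_card, hdm]
  have hm : 0 < m := (pos_of_card_eq_mul hcard).2
  set β := cosetEquiv hω hcard
  refine ⟨β.bijective, fun σ => ⟨?_, ?_⟩⟩
  · rintro ⟨ψ, s, b, -, hσ⟩
    obtain ⟨A, r, hr, hA⟩ := exists_monomial_of_wreath (ω := ω) hm hσ
    refine ⟨fun i => A i, r, hr, extendByZero (β.permCongr σ),
      ⟨extendByZero_zero _, fun x i hx => ?_⟩, Equiv.bijective _, fun c i => ?_⟩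
    · rw [extendByZero_coe, Equiv.permCongr_apply, cosetEquiv_symm_apply hω hcard hx,
        cosetEquiv_apply, hA, inv_mul_cancel_right]
      push_cast
      rfl
    · rw [← cosetEquiv_apply hω hcard (c, i), extendByZero_coe, Equiv.permCongr_apply,
        Equiv.symm_apply_apply]
      rfl
  · rintro ⟨a, r, -, f, ⟨-, hf⟩, -, hcomp⟩
    have hσ : ∀ c i, ((β (σ (c, i)) : Fˣ) : F) = a i * ((β (c, i) : Fˣ) : F) ^ r i :=
      fun c i => (hcomp c i).trans (hf _ i (by simpa using c.2))
    have ha : ∀ i, a i ≠ 0 := fun i ha =>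
      (β (σ (⟨1, one_pow m⟩, i))).ne_zero (by simp [hσ, ha])
    exact exists_wreath_of_monomial hω hcard σ (fun i => Units.mk0 (a i) (ha i)) r
      fun c i => Units.ext (by simpa [β] using hσ c i)

/-- Theorem 1.1 (wreath product form vs. cyclotomic form): the map
`β : C × {0,…,d−1} → Fˣ, (c,i) ↦ c·ω^i` is a bijection, and a permutation `σ` of
`C × {0,…,d−1}` is an element of the imprimitive wreath product
`Hol(C) ≀ Sym(d)` (i.e. has the form `(c,i) ↦ (b_{ψ(i)}·c^{s_{ψ(i)}}, ψ(i))`) if and only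
if it corresponds, under conjugation by `β`, to (the restriction to `Fˣ` of) an index `d`
generalized cyclotomic permutation of `F`. -/
theorem stmt0 {F : Type*} [Field F] [Fintype F] (ω : Fˣ)
    (hω : ∀ x : Fˣ, x ∈ Subgroup.zpowers ω)
    (d m : ℕ) (hd : 0 < d) (hdm : d * m = Fintype.card F - 1) :
    Function.Bijective
      (fun ci : {x : Fˣ // x ^ m = 1} × Fin d => ((ci.1 : Fˣ) * ω ^ (ci.2 : ℕ))) ∧
    ∀ σ : Equiv.Perm ({x : Fˣ // x ^ m = 1} × Fin d),
      ((∃ (ψ : Equiv.Perm (Fin d)) (s : Fin d → ℤ) (b : Fin d → {x : Fˣ // x ^ m = 1}),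
          (∀ i, Int.gcd (s i) (m : ℤ) = 1) ∧
          ∀ (c : {x : Fˣ // x ^ m = 1}) (i : Fin d),
            ((σ (c, i)).1 : Fˣ) = (b (ψ i) : Fˣ) * (c : Fˣ) ^ (s (ψ i)) ∧
            (σ (c, i)).2 = ψ i)
       ↔
       (∃ (a : Fin d → F) (r : Fin d → ℕ), (∀ i, 1 ≤ r i ∧ r i ≤ m) ∧
          ∃ f : F → F, IsGCM ω d m a r f ∧ Function.Bijective f ∧
            ∀ (c : {x : Fˣ // x ^ m = 1}) (i : Fin d),
              ((((σ (c, i)).1 : Fˣ) * ω ^ (((σ (c, i)).2 : Fin d) : ℕ) : Fˣ) : F)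
                = f ((((c : Fˣ) * ω ^ (i : ℕ) : Fˣ)) : F))) :=
  stmt0_general ω hω d m hdm
end

section
/- If f and g are index d generalized cyclotomic permutations of F_q (for the same prime power q, divisor d of q−1 and primitive root ω), then the composite g∘f is again an index d generalized cyclotomic permutation of F_q, and the inverse function f⁻¹ is again an index d generalized cyclotomic permutation of F_q; that is, the index d generalized cyclotomic permutations of F_q form a group under composition. -/
/-- `f` is an index `d` generalized cyclotomic permutation of `F`: it is a generalized
cyclotomic mapping `f_ω(a,r)` (with all exponents in `{1,…,m}`) that is bijective. -/
def IsGCP {F : Type*} [Field F] (ω : Fˣ) (d m : ℕ) (f : F → F) : Prop :=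
  ∃ (a : Fin d → F) (r : Fin d → ℕ),
    (∀ i, 1 ≤ r i ∧ r i ≤ m) ∧ IsGCM ω d m a r f ∧ Function.Bijective f

/-!
On the coset `C_i = ω^i C` a generalized cyclotomic map is a monomial `x ↦ a x^e`, and since
`x^m = ω^(im)` on `C_i`, the exponent only matters modulo `m` up to a change of the coefficient.
A monomial with nonzero coefficient maps `C_i` into a single coset `C_j`, so composites are again
monomials on each coset. For the inverse of a bijective `f`, injectivity on `C_i` forces `r_i`
to be coprime to `m`, so `r_i t ≡ 1 (mod m)` for some `t`; surjectivity of `f` makes the induced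
map `i ↦ j` on coset indices surjective, hence bijective, and solving `y = a x^(r_i)` on `C_i`
gives `x = c y^t`.
-/

open Function Subgroup

section Coset

variable {G : Type*} [CommGroup G] {ω x : G} {d m i j e e' : ℕ}

/-- `x ∈ C_i = ω^i C`, where `C = {c | c ^ m = 1}`. -/
def MemCoset (ω : G) (m i : ℕ) (x : G) : Prop := (x * (ω ^ i)⁻¹) ^ m = 1

theorem memCoset_iff : MemCoset ω m i x ↔ x ^ m = ω ^ (i * m) := by
  rw [MemCoset, mul_pow, inv_pow, mul_inv_eq_one, pow_mul]

theorem memCoset_mul_iff {c : G} : MemCoset ω m i (ω ^ i * c) ↔ c ^ m = 1 := by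
  rw [MemCoset, mul_inv_cancel_comm]

theorem memCoset_pow_self : MemCoset ω m i (ω ^ i) := by
  simpa using (memCoset_mul_iff (c := (1 : G))).2 (one_pow m)

theorem MemCoset.exists_eq_mul (hx : MemCoset ω m i x) : ∃ c, c ^ m = 1 ∧ x = ω ^ i * c :=
  ⟨x * (ω ^ i)⁻¹, hx, (mul_inv_cancel_comm _ _).symm.trans (mul_assoc _ _ _)⟩

theorem MemCoset.mul_pow {a : G} (hx : MemCoset ω m i x) (ha : MemCoset ω m j (a * ω ^ (i * e))) :
    MemCoset ω m j (a * x ^ e) := by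
  rw [memCoset_iff] at *
  calc (a * x ^ e) ^ m = a ^ m * (x ^ m) ^ e := by rw [_root_.mul_pow, pow_right_comm]
    _ = (a * ω ^ (i * e)) ^ m := by rw [hx, _root_.mul_pow, ← pow_mul, ← pow_mul, mul_right_comm]
    _ = ω ^ (j * m) := ha

theorem MemCoset.pow_eq_of_modEq (hx : MemCoset ω m i x) (h : e ≡ e' [MOD m]) :
    x ^ e = ω ^ (i * e) * (ω ^ (i * e'))⁻¹ * x ^ e' := by
  obtain ⟨c, hc, rfl⟩ := hx.exists_eq_mul
  rw [_root_.mul_pow, _root_.mul_pow, ← pow_mul, ← pow_mul, pow_eq_pow_mod e hc,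
    pow_eq_pow_mod e' hc, h, mul_assoc _ _ (_ * _), inv_mul_cancel_left]

theorem MemCoset.eq_of_mul_pow_eq {a y : G} {r t : ℕ} (hx : MemCoset ω m i x)
    (hrt : r * t ≡ 1 [MOD m]) (hy : a * x ^ r = y) :
    x = ω ^ i * (a ^ t * ω ^ (i * (r * t)))⁻¹ * y ^ t := by
  rw [← hy, _root_.mul_pow, ← pow_mul, hx.pow_eq_of_modEq hrt, mul_one, pow_one]
  group

theorem exists_memCoset [Finite G] (hω : ∀ x : G, x ∈ zpowers ω) (hord : orderOf ω = d * m)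
    (hd : 0 < d) (x : G) : ∃ i : Fin d, MemCoset ω m i x := by
  obtain ⟨k, rfl⟩ := mem_powers_iff_mem_zpowers.2 (hω x)
  refine ⟨⟨k % d, Nat.mod_lt k hd⟩, memCoset_iff.2 ?_⟩
  rw [← pow_mul, pow_eq_pow_iff_modEq, hord]
  exact (Nat.mod_modEq k d).symm.mul_right' m

theorem MemCoset.unique (hord : orderOf ω = d * m) (hm : 0 < m) {i i' : Fin d}
    (hi : MemCoset ω m i x) (hi' : MemCoset ω m i' x) : i = i' := by
  rw [memCoset_iff] at hi hi'
  have h : (i : ℕ) * m ≡ i' * m [MOD d * m] := by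
    rw [← hord, ← pow_eq_pow_iff_modEq, ← hi, hi']
  exact Fin.ext ((Nat.ModEq.mul_right_cancel' hm.ne' h).eq_of_lt_of_lt i.2 i'.2)

end Coset

theorem coprime_of_forall_pow_eq_one {G : Type*} [Monoid G] {ζ : G} {m r : ℕ}
    (hζ : orderOf ζ = m) (hm : 0 < m) (h : ∀ c : G, c ^ m = 1 → c ^ r = 1 → c = 1) :
    r.Coprime m := by
  rw [Nat.Coprime]
  generalize hg : r.gcd m = g
  obtain ⟨s, rfl⟩ := hg ▸ Nat.gcd_dvd_left r m
  obtain ⟨n, rfl⟩ := hg ▸ Nat.gcd_dvd_right (g * s) m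
  have hn : 0 < n := Nat.pos_of_mul_pos_left hm
  have hζn : ζ ^ n = 1 := by
    refine h _ ?_ ?_
    · rw [← pow_mul, mul_comm, pow_mul, ← hζ, pow_orderOf_eq_one, one_pow]
    · rw [← pow_mul, show n * (g * s) = g * n * s by ring, pow_mul, ← hζ, pow_orderOf_eq_one,
        one_pow]
  have hdvd : g * n ∣ 1 * n := by simpa [hζ] using orderOf_dvd_of_pow_eq_one hζn
  exact Nat.dvd_one.1 (Nat.dvd_of_mul_dvd_mul_right hn hdvd)

section Field

variable {F : Type*} [Field F] {ω : Fˣ} {d m : ℕ} {f g : F → F}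

theorem IsGCM.isUnit_coeff {a : Fin d → F} {r : Fin d → ℕ} (hf : IsGCM ω d m a r f)
    (hinj : Injective f) (i : Fin d) : IsUnit (a i) := by
  refine isUnit_iff_ne_zero.2 fun ha => (ω ^ (i : ℕ)).ne_zero (hinj ?_)
  rw [hf.2 _ i memCoset_pow_self, ha, zero_mul, hf.1]

theorem IsGCM.coprime_exp {a : Fin d → F} {r : Fin d → ℕ} (hord : orderOf ω = d * m)
    (hd : 0 < d) (hm : 0 < m) (hf : IsGCM ω d m a r f) (hinj : Injective f) (i : Fin d) :
    (r i).Coprime m := by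
  have hζ : orderOf (ω ^ d) = m := by
    rw [orderOf_pow_of_dvd hd.ne' (hord ▸ dvd_mul_right d m), hord, Nat.mul_div_cancel_left m hd]
  refine coprime_of_forall_pow_eq_one hζ hm fun c hcm hcr => ?_
  have h : f ↑(ω ^ (i : ℕ) * c) = f ↑(ω ^ (i : ℕ)) := by
    rw [hf.2 _ i (memCoset_mul_iff.2 hcm), hf.2 _ i memCoset_pow_self, ← Units.val_pow_eq_pow_val,
      mul_pow, hcr, mul_one, Units.val_pow_eq_pow_val]
  exact mul_eq_left.1 (Units.ext (hinj h))

theorem isGCP_of_forall_memCoset (hm : 0 < m) (h0 : f 0 = 0) (hf : Bijective f)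
    (hmono : ∀ i : Fin d, ∃ (a : F) (e : ℕ), ∀ x : Fˣ, MemCoset ω m i x → f x = a * x ^ e) :
    IsGCP ω d m f := by
  choose a e ha using hmono
  set r : Fin d → ℕ := fun i => (e i + m - 1) % m + 1
  have her : ∀ i, e i ≡ r i [MOD m] := fun i =>
    calc e i ≡ e i + m [MOD m] := Nat.add_modEq_right.symm
      _ = e i + m - 1 + 1 := by omega
      _ ≡ r i [MOD m] := ((Nat.mod_modEq _ m).add_right 1).symm
  refine ⟨fun i => a i * ↑(ω ^ (i * e i : ℕ) * (ω ^ (i * r i : ℕ))⁻¹), r,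
    fun i => ⟨Nat.le_add_left 1 _, Nat.mod_lt _ hm⟩, ⟨h0, fun x i hx => ?_⟩, hf⟩
  rw [ha i x hx, ← Units.val_pow_eq_pow_val, MemCoset.pow_eq_of_modEq hx (her i)]
  push_cast
  ring

variable [Finite F]

theorem IsGCP.comp (hω : ∀ x : Fˣ, x ∈ zpowers ω) (hord : orderOf ω = d * m)
    (hg : IsGCP ω d m g) (hf : IsGCP ω d m f) : IsGCP ω d m (g ∘ f) := by
  obtain ⟨hd, hm⟩ := CanonicallyOrderedAdd.mul_pos.1 (hord ▸ orderOf_pos ω)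
  obtain ⟨a, r, -, hfm, hfb⟩ := hf
  obtain ⟨b, s, -, hgm, hgb⟩ := hg
  lift a to Fin d → Fˣ using hfm.isUnit_coeff hfb.injective
  refine isGCP_of_forall_memCoset hm (by simp [hfm.1, hgm.1]) (hgb.comp hfb) fun i => ?_
  obtain ⟨j, hj⟩ := exists_memCoset hω hord hd (a i * ω ^ ((i : ℕ) * r i))
  refine ⟨b j * a i ^ s j, r i * s j, fun x hx => ?_⟩
  have hgx := hgm.2 _ j (hx.mul_pow hj)
  push_cast at hgx
  rw [comp_apply, hfm.2 x i hx, hgx]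
  ring

theorem IsGCM.exists_memCoset_mul_pow_eq (hω : ∀ x : Fˣ, x ∈ zpowers ω)
    (hord : orderOf ω = d * m) (hd : 0 < d) {a : Fin d → Fˣ} {r : Fin d → ℕ}
    (hf : IsGCM ω d m (fun i => a i) r f) (hsurj : Surjective f) (y : Fˣ) :
    ∃ (x : Fˣ) (i : Fin d), MemCoset ω m i x ∧ a i * x ^ r i = y := by
  obtain ⟨x, hxy⟩ := hsurj y
  lift x to Fˣ using isUnit_iff_ne_zero.2 (by rintro rfl; exact y.ne_zero (hxy ▸ hf.1))
  obtain ⟨i, hi⟩ := exists_memCoset hω hord hd x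
  refine ⟨x, i, hi, Units.ext ?_⟩
  rw [← hxy, hf.2 x i hi]
  push_cast
  rfl

theorem IsGCP.invFun (hω : ∀ x : Fˣ, x ∈ zpowers ω) (hord : orderOf ω = d * m)
    (hf : IsGCP ω d m f) : IsGCP ω d m (Function.invFun f) := by
  obtain ⟨hd, hm⟩ := CanonicallyOrderedAdd.mul_pos.1 (hord ▸ orderOf_pos ω)
  obtain ⟨a, r, -, hfm, hfb⟩ := hf
  have hcop := hfm.coprime_exp hord hd hm hfb.injective
  lift a to Fin d → Fˣ using hfm.isUnit_coeff hfb.injective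
  have hpre := hfm.exists_memCoset_mul_pow_eq hω hord hd hfb.surjective
  have hinv : LeftInverse (Function.invFun f) f := leftInverse_invFun hfb.injective
  choose j hj using fun i : Fin d => exists_memCoset hω hord hd (a i * ω ^ ((i : ℕ) * r i))
  have hj_surj : Surjective j := fun k => by
    obtain ⟨x, i, hx, hxk⟩ := hpre (ω ^ (k : ℕ))
    exact ⟨i, (hxk ▸ hx.mul_pow (hj i)).unique hord hm memCoset_pow_self⟩
  have hj_inj : Injective j := Finite.injective_iff_surjective.2 hj_surj
  refine isGCP_of_forall_memCoset hm (by simpa [hfm.1] using hinv 0)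
    (bijective_iff_has_inverse.2 ⟨f, rightInverse_invFun hfb.surjective, hinv⟩) fun k => ?_
  obtain ⟨i, rfl⟩ := hj_surj k
  obtain ⟨t, ht⟩ : ∃ t, r i * t ≡ 1 [MOD m] := ⟨r i ^ (m.totient - 1), by
    rw [← pow_succ', Nat.sub_add_cancel (Nat.totient_pos.2 hm)]
    exact Nat.ModEq.pow_totient (hcop i)⟩
  refine ⟨↑(ω ^ (i : ℕ) * (a i ^ t * ω ^ ((i : ℕ) * (r i * t)))⁻¹), t, fun y hy => ?_⟩
  obtain ⟨x, i', hx, rfl⟩ := hpre y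
  obtain rfl : i = i' := (hj_inj ((hx.mul_pow (hj i')).unique hord hm hy)).symm
  have hfx : f x = ↑(a i * x ^ r i) := by
    rw [hfm.2 x i hx]
    push_cast
    rfl
  rw [← hfx, hinv, hfx, ← Units.val_pow_eq_pow_val, ← Units.val_mul, ← hx.eq_of_mul_pow_eq ht rfl]

end Field

theorem stmt1_general {F : Type*} [Field F] [Fintype F] (ω : Fˣ)
    (hω : ∀ x : Fˣ, x ∈ Subgroup.zpowers ω)
    (d m : ℕ) (hdm : d * m = Fintype.card F - 1)
    (f g : F → F) (hf : IsGCP ω d m f) (hg : IsGCP ω d m g) :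
    IsGCP ω d m (g ∘ f) ∧ IsGCP ω d m (Function.invFun f) := by
  have hord : orderOf ω = d * m := by
    rw [orderOf_eq_card_of_forall_mem_zpowers hω, Nat.card_units, Nat.card_eq_fintype_card, hdm]
  exact ⟨hg.comp hω hord hf, hf.invFun hω hord⟩

/-- The index `d` generalized cyclotomic permutations of `F` are closed under composition
and under taking the inverse function; i.e. they form a group under composition. -/
theorem stmt1 {F : Type*} [Field F] [Fintype F] (ω : Fˣ)
    (hω : ∀ x : Fˣ, x ∈ Subgroup.zpowers ω)
    (d m : ℕ) (hd : 0 < d) (hdm : d * m = Fintype.card F - 1)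
    (f g : F → F) (hf : IsGCP ω d m f) (hg : IsGCP ω d m g) :
    IsGCP ω d m (g ∘ f) ∧ IsGCP ω d m (Function.invFun f) :=
  stmt1_general ω hω d m hdm f g hf hg
end

section
/- Let q be a prime power, d a positive divisor of q−1, ω a primitive root of F_q, and m := (q−1)/d. Let s be an integer with 1 ≤ s ≤ m and gcd(s, m) = 1. Then the number of tuples a = (a_0,…,a_{d−1}) ∈ F_q^d for which the index d generalized cyclotomic mapping f_ω(a,(s,s,…,s)) is a permutation of F_q (i.e., the number of s-th order cyclotomic permutations of F_q of index d) equals d!·m^d. -/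
open Function Subgroup Nat

section Coprime
variable {G : Type*} [CommGroup G] {s m : ℕ}

theorem mul_inv_pow_eq_one_iff {x y : G} {n : ℕ} : (x * y⁻¹) ^ n = 1 ↔ x ^ n = y ^ n := by
  rw [mul_pow, inv_pow, mul_inv_eq_one]

theorem eq_of_pow_eq_of_pow_eq_of_coprime (hsm : s.Coprime m) {x y : G}
    (hs : x ^ s = y ^ s) (hm : x ^ m = y ^ m) : x = y := by
  rw [← mul_inv_eq_one, ← orderOf_eq_one_iff]
  exact Nat.eq_one_of_dvd_coprimes hsm (orderOf_dvd_of_pow_eq_one (mul_inv_pow_eq_one_iff.2 hs))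
    (orderOf_dvd_of_pow_eq_one (mul_inv_pow_eq_one_iff.2 hm))

theorem exists_pow_eq_of_pow_eq_one_of_coprime (hsm : s.Coprime m) {z : G} (hz : z ^ m = 1) :
    ∃ c : G, c ^ m = 1 ∧ c ^ s = z := by
  obtain ⟨u, hu⟩ :=
    exists_pow_eq_self_of_coprime (hsm.coprime_dvd_right (orderOf_dvd_of_pow_eq_one hz))
  refine ⟨z ^ u, ?_, ?_⟩
  · rw [← pow_mul, mul_comm, pow_mul, hz, one_pow]
  · rw [← pow_mul, mul_comm, pow_mul, hu]

end Coprime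

theorem Nat.card_injective_snd_comp (ι α β : Type*) :
    Nat.card {p : ι → α × β // Injective (Prod.snd ∘ p)} =
      Nat.card (ι → α) * Nat.card (ι ↪ β) :=
  (Nat.card_congr
    { toFun := fun p => (Prod.fst ∘ p.1, ⟨Prod.snd ∘ p.1, p.2⟩)
      invFun := fun q => ⟨fun i => (q.1 i, q.2 i), q.2.injective⟩
      left_inv := fun _ => rfl
      right_inv := fun _ => rfl }).trans (Nat.card_prod _ _)

theorem injective_of_units {G₀ M₀ : Type*} [GroupWithZero G₀] [Zero M₀] {f : G₀ → M₀}
    (h0 : f 0 = 0) (hne : ∀ x : G₀ˣ, f x ≠ 0)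
    (hunits : ∀ x y : G₀ˣ, f x = f y → x = y) :
    Injective f := by
  intro x y hxy
  rcases eq_or_ne x 0 with rfl | hx <;> rcases eq_or_ne y 0 with rfl | hy
  · rfl
  · lift y to G₀ˣ using hy.isUnit
    exact absurd (hxy.symm.trans h0) (hne y)
  · lift x to G₀ˣ using hx.isUnit
    exact absurd (hxy.trans h0) (hne x)
  · lift x to G₀ˣ using hx.isUnit
    lift y to G₀ˣ using hy.isUnit
    exact congrArg _ (hunits x y hxy)

section Cyclic
variable {G : Type*} [CommGroup G] {ω : G} {d m : ℕ}

theorem injective_pow_pow_of_orderOf_eq (hord : orderOf ω = d * m) (hm : 0 < m) :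
    Injective fun i : Fin d => (ω ^ (i : ℕ)) ^ m := by
  have hlt (i : Fin d) : (i : ℕ) * m ∈ Set.Iio (orderOf ω) :=
    hord ▸ Nat.mul_lt_mul_of_pos_right i.isLt hm
  intro i k h
  simp only [← pow_mul] at h
  exact Fin.ext (Nat.eq_of_mul_eq_mul_right hm (pow_injOn_Iio_orderOf (hlt i) (hlt k) h))

variable [Finite G] (hω : ∀ x, x ∈ zpowers ω) (hord : orderOf ω = d * m)
include hω hord

/-- `(k, j) ↦ ω ^ (j + d * k)`. -/
noncomputable def powProdEquiv : Fin m × Fin d ≃ G :=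
  Equiv.ofBijective (fun p => ω ^ ((finProdFinEquiv p : Fin (m * d)) : ℕ)) <| by
    have hlt (n : Fin (m * d)) : (n : ℕ) ∈ Set.Iio (orderOf ω) :=
      hord ▸ mul_comm m d ▸ n.isLt
    refine Injective.bijective_of_nat_card_le (fun p q h =>
      finProdFinEquiv.injective (Fin.ext (pow_injOn_Iio_orderOf (hlt _) (hlt _) h))) ?_
    rw [← orderOf_eq_card_of_forall_mem_zpowers hω, hord, Nat.card_prod, Nat.card_fin,
      Nat.card_fin, mul_comm]

theorem powProdEquiv_pow (p : Fin m × Fin d) :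
    powProdEquiv hω hord p ^ m = (ω ^ (p.2 : ℕ)) ^ m := by
  simp only [powProdEquiv, Equiv.ofBijective_apply, finProdFinEquiv_apply_val]
  rw [← pow_mul, ← pow_mul, show (p.2 + d * p.1) * m = p.2 * m + d * m * p.1 by ring, pow_add,
    pow_mul ω (d * m), ← hord, pow_orderOf_eq_one, one_pow, mul_one]

theorem exists_mul_inv_pow_eq_one (x : G) : ∃ i : Fin d, (x * (ω ^ (i : ℕ))⁻¹) ^ m = 1 := by
  obtain ⟨p, rfl⟩ := (powProdEquiv hω hord).surjective x
  exact ⟨p.2, mul_inv_pow_eq_one_iff.2 (powProdEquiv_pow hω hord p)⟩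

theorem card_injective_pow (hm : 0 < m) :
    Nat.card {c : Fin d → G // Injective fun i => c i ^ m} = d ! * m ^ d := by
  let e := (Equiv.refl (Fin d)).arrowCongr (powProdEquiv hω hord)
  have he (p : Fin d → Fin m × Fin d) :
      Injective (Prod.snd ∘ p) ↔ Injective fun i => e p i ^ m := by
    simp only [e, Equiv.arrowCongr_apply, comp_apply, powProdEquiv_pow]
    exact ((injective_pow_pow_of_orderOf_eq hord hm).of_comp_iff _).symm
  rw [← Nat.card_congr (e.subtypeEquiv he), Nat.card_injective_snd_comp, Nat.card_fun,
    Nat.card_eq_fintype_card (α := Fin d ↪ Fin d), Fintype.card_embedding_eq]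
  simp [Nat.descFactorial_self, mul_comm]

end Cyclic

section Field
variable {F : Type*} [Field F] {ω : Fˣ} {d m s : ℕ}

theorem exists_isGCM [Finite F] (hω : ∀ x, x ∈ zpowers ω) (hord : orderOf ω = d * m)
    (hm : 0 < m) (a : Fin d → F) (r : Fin d → ℕ) : ∃ f, IsGCM ω d m a r f := by
  classical
  choose idx hidx using exists_mul_inv_pow_eq_one hω hord
  refine ⟨fun x => if hx : x = 0 then 0 else
    a (idx (Units.mk0 x hx)) * x ^ r (idx (Units.mk0 x hx)), dif_pos rfl, fun x i hi => ?_⟩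
  have hxi : idx x = i := injective_pow_pow_of_orderOf_eq hord hm
    ((mul_inv_pow_eq_one_iff.1 (hidx x)).symm.trans (mul_inv_pow_eq_one_iff.1 hi))
  dsimp only
  rw [dif_neg x.ne_zero, Units.mk0_val, hxi]

theorem IsGCM.ne_zero_of_injective {a : Fin d → F} {r : Fin d → ℕ} {f : F → F}
    (hf : IsGCM ω d m a r f) (hinj : Injective f) (i : Fin d) : a i ≠ 0 := by
  intro hai
  have h : f ↑(ω ^ (i : ℕ)) = f 0 := by
    rw [hf.2 _ i (by rw [mul_inv_cancel, one_pow]), hai, zero_mul, hf.1]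
  exact (ω ^ (i : ℕ)).ne_zero (hinj h)

variable {b : Fin d → Fˣ} {f : F → F}

theorem IsGCM.injective [Finite F] (hω : ∀ x, x ∈ zpowers ω) (hord : orderOf ω = d * m)
    (hsm : s.Coprime m) (hf : IsGCM ω d m (fun i => (b i : F)) (fun _ => s) f)
    (hb : Injective fun i : Fin d => (b i * (ω ^ (i : ℕ)) ^ s) ^ m) : Injective f := by
  have hunit (x : Fˣ) :
      ∃ i : Fin d, x ^ m = (ω ^ (i : ℕ)) ^ m ∧ f x = ↑(b i * x ^ s) := by
    obtain ⟨i, hi⟩ := exists_mul_inv_pow_eq_one hω hord x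
    exact ⟨i, mul_inv_pow_eq_one_iff.1 hi, by rw [hf.2 x i hi]; push_cast; rfl⟩
  have hunits (x y : Fˣ) (hxy : f x = f y) : x = y := by
    obtain ⟨i, hxi, hfx⟩ := hunit x
    obtain ⟨k, hyk, hfy⟩ := hunit y
    have hxy' : b i * x ^ s = b k * y ^ s := Units.ext (hfx.symm.trans (hxy.trans hfy))
    have hpow (j : Fin d) (z : Fˣ) (hz : z ^ m = (ω ^ (j : ℕ)) ^ m) :
        (b j * z ^ s) ^ m = (b j * (ω ^ (j : ℕ)) ^ s) ^ m := by
      rw [mul_pow, mul_pow, pow_right_comm z, hz, pow_right_comm _ m s]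
    obtain rfl : i = k := hb ((hpow i x hxi).symm.trans (by rw [hxy', hpow k y hyk]))
    exact eq_of_pow_eq_of_pow_eq_of_coprime hsm (mul_left_cancel hxy') (hxi.trans hyk.symm)
  refine injective_of_units hf.1 (fun x => ?_) hunits
  obtain ⟨i, -, hfx⟩ := hunit x
  exact hfx ▸ Units.ne_zero _

theorem IsGCM.injective_pow (hord : orderOf ω = d * m) (hm : 0 < m) (hsm : s.Coprime m)
    (hf : IsGCM ω d m (fun i => (b i : F)) (fun _ => s) f) (hinj : Injective f) :
    Injective fun i : Fin d => (b i * (ω ^ (i : ℕ)) ^ s) ^ m := by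
  intro i k hik
  dsimp only at hik
  -- a collision `f (ω^i c) = f (ω^k)` with `c ∈ C`, which forces `ω^k ∈ C_i`
  obtain ⟨c, hcm, hcs⟩ := exists_pow_eq_of_pow_eq_one_of_coprime hsm
    (z := (b k * (ω ^ (k : ℕ)) ^ s) / (b i * (ω ^ (i : ℕ)) ^ s))
    (by rw [div_pow, hik, div_self'])
  have hx : (ω ^ (i : ℕ) * c * (ω ^ (i : ℕ))⁻¹) ^ m = 1 := by
    rwa [mul_inv_cancel_comm]
  have hy : (ω ^ (k : ℕ) * (ω ^ (k : ℕ))⁻¹) ^ m = 1 := by rw [mul_inv_cancel, one_pow]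
  have hxy : ω ^ (i : ℕ) * c = ω ^ (k : ℕ) := by
    refine Units.ext (hinj ?_)
    rw [hf.2 _ i hx, hf.2 _ k hy]
    dsimp only
    exact_mod_cast show b i * (ω ^ (i : ℕ) * c) ^ s = b k * (ω ^ (k : ℕ)) ^ s by
      rw [mul_pow, hcs, ← mul_assoc, mul_div_cancel]
  apply injective_pow_pow_of_orderOf_eq hord hm
  dsimp only
  rw [← hxy, mul_pow, hcm, mul_one]

theorem exists_isGCM_bijective_iff [Finite F] (hω : ∀ x, x ∈ zpowers ω)
    (hord : orderOf ω = d * m) (hm : 0 < m) (hsm : s.Coprime m) (a : Fin d → F) :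
    (∃ f, IsGCM ω d m a (fun _ => s) f ∧ Bijective f) ↔
      ∃ c : Fin d → Fˣ, (Injective fun i => c i ^ m) ∧
        (fun i => ((c i * ((ω ^ (i : ℕ)) ^ s)⁻¹ : Fˣ) : F)) = a := by
  constructor
  · rintro ⟨f, hf, hbij⟩
    obtain ⟨b, rfl⟩ : ∃ b : Fin d → Fˣ, (fun i => (b i : F)) = a :=
      ⟨fun i => Units.mk0 _ (hf.ne_zero_of_injective hbij.injective i), rfl⟩
    exact ⟨fun i => b i * (ω ^ (i : ℕ)) ^ s, hf.injective_pow hord hm hsm hbij.injective,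
      by simp only [mul_inv_cancel_right]⟩
  · rintro ⟨c, hc, rfl⟩
    obtain ⟨f, hf⟩ := exists_isGCM hω hord hm
      (fun i => ((c i * ((ω ^ (i : ℕ)) ^ s)⁻¹ : Fˣ) : F)) (fun _ => s)
    refine ⟨f, hf, Finite.injective_iff_bijective.1 (hf.injective hω hord hsm ?_)⟩
    simpa only [inv_mul_cancel_right] using hc

end Field

theorem stmt2_general {F : Type*} [Field F] [Fintype F] (ω : Fˣ)
    (hω : ∀ x : Fˣ, x ∈ Subgroup.zpowers ω)
    (d m : ℕ) (hdm : d * m = Fintype.card F - 1)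
    (s : ℕ) (hcop : Nat.Coprime s m) :
    Nat.card {a : Fin d → F // ∃ f : F → F,
        IsGCM ω d m a (fun _ => s) f ∧ Function.Bijective f}
      = Nat.factorial d * m ^ d := by
  classical
  have hcard : Nat.card Fˣ = d * m := by
    rw [Nat.card_eq_fintype_card, Fintype.card_units, hdm]
  have hm : 0 < m := Nat.pos_of_mul_pos_left (hcard ▸ Nat.card_pos)
  have hord : orderOf ω = d * m := (orderOf_eq_card_of_forall_mem_zpowers hω).trans hcard
  let coeff : (Fin d → Fˣ) → Fin d → F := fun c i => ↑(c i * ((ω ^ (i : ℕ)) ^ s)⁻¹)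
  have hcoeff : Injective coeff := fun c c' h => funext fun i =>
    mul_right_cancel (Units.ext (congrFun h i))
  have hS : {a : Fin d → F | ∃ f, IsGCM ω d m a (fun _ => s) f ∧ Bijective f} =
      coeff '' {c | Injective fun i => c i ^ m} := by
    ext a
    exact exists_isGCM_bijective_iff hω hord hm hcop a
  change Nat.card ↥{a : Fin d → F | _} = _
  rw [hS, Nat.card_image_of_injective hcoeff]
  exact card_injective_pow hω hord hm

/-- The number of tuples `a ∈ F^d` for which the `s`-th order cyclotomic mapping
`f_ω(a,(s,…,s))` of index `d` is a permutation of `F` equals `d! · m^d`. -/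
theorem stmt2 {F : Type*} [Field F] [Fintype F] (ω : Fˣ)
    (hω : ∀ x : Fˣ, x ∈ Subgroup.zpowers ω)
    (d m : ℕ) (hd : 0 < d) (hdm : d * m = Fintype.card F - 1)
    (s : ℕ) (hs1 : 1 ≤ s) (hs2 : s ≤ m) (hcop : Nat.Coprime s m) :
    Nat.card {a : Fin d → F // ∃ f : F → F,
        IsGCM ω d m a (fun _ => s) f ∧ Function.Bijective f}
      = Nat.factorial d * m ^ d :=
  stmt2_general ω hω d m hdm s hcop
end

section
/- Let q be a prime power, d a positive divisor of q−1, ω a primitive root of F_q, m := (q−1)/d, and ζ := ω^m (a primitive d-th root of unity in F_q). Note that d·1 is invertible in F_q since d divides q−1. Then for every tuple a = (a_0,…,a_{d−1}) ∈ F_q^d, every tuple r = (r_0,…,r_{d−1}) of integers with 1 ≤ r_i ≤ m, and every x ∈ F_q: f_ω(a,r)(x) = (1/d)·Σ_{i=0}^{d−1} Σ_{j=0}^{d−1} ζ^{−ij}·a_i·x^{j·m + r_i}, where ζ^{−ij} denotes the multiplicative inverse of ζ^{ij}. Explicitly: the right-hand side equals 0 when x = 0, and equals a_i·x^{r_i}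 when x ∈ C_i (i.e., when (x·ω^{−i})^m = 1). -/
open Finset

lemma pow_mul_inv_pow_mod_pow_eq_one {G : Type*} [Group G] {ω : G} {d m : ℕ}
    (hω : ω ^ (d * m) = 1) (k : ℕ) : (ω ^ k * (ω ^ (k % d))⁻¹) ^ m = 1 := by
  have hquot : ω ^ k * (ω ^ (k % d))⁻¹ = ω ^ (d * (k / d)) := by
    rw [mul_inv_eq_iff_eq_mul, ← pow_add, Nat.div_add_mod]
  rw [hquot, ← pow_mul, mul_right_comm, pow_mul, hω, one_pow]

lemma pow_eq_of_mul_inv_pow_eq_one {G : Type*} [CommGroup G] {x y : G} {m : ℕ}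
    (h : (x * y⁻¹) ^ m = 1) : x ^ m = y ^ m := by
  rwa [mul_pow, inv_pow, mul_inv_eq_one] at h

lemma geom_sum_eq_zero_of_pow_eq_one {K : Type*} [Field K] {w : K} {d : ℕ}
    (hw : w ^ d = 1) (hw1 : w ≠ 1) : ∑ j ∈ range d, w ^ j = 0 := by
  rw [geom_sum_eq hw1, hw, sub_self, zero_div]

namespace IsPrimitiveRoot

variable {K : Type*} [Field K] {ζ : K} {d : ℕ}

lemma sum_inv_pow_mul_pow_pow (hζ : IsPrimitiveRoot ζ d) (i k : Fin d) :
    ∑ j : Fin d, ((ζ ^ (i : ℕ))⁻¹ * ζ ^ (k : ℕ)) ^ (j : ℕ) = if i = k then (d : K) else 0 := by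
  rw [Fin.sum_univ_eq_sum_range (fun j => ((ζ ^ (i : ℕ))⁻¹ * ζ ^ (k : ℕ)) ^ j)]
  have hζ0 : ζ ^ (i : ℕ) ≠ 0 := pow_ne_zero _ (hζ.ne_zero (Fin.pos i).ne')
  split_ifs with hik
  · subst hik
    simp [inv_mul_cancel₀ hζ0]
  · refine geom_sum_eq_zero_of_pow_eq_one ?_ fun h => hik ?_
    · rw [mul_pow, inv_pow, ← pow_mul, ← pow_mul, pow_mul', pow_mul' ζ k, hζ.pow_eq_one,
        one_pow, one_pow, inv_one, one_mul]
    · exact Fin.ext (hζ.pow_inj i.isLt k.isLt (inv_mul_eq_one₀ hζ0 |>.mp h))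

lemma sum_sum_inv_pow_mul_pow_eq (hζ : IsPrimitiveRoot ζ d) {m : ℕ} (a : Fin d → K)
    (r : Fin d → ℕ) {x : K} {k : Fin d} (hx : x ^ m = ζ ^ (k : ℕ)) :
    ∑ i : Fin d, ∑ j : Fin d, (ζ ^ ((i : ℕ) * (j : ℕ)))⁻¹ * a i * x ^ ((j : ℕ) * m + r i) =
      d * (a k * x ^ r k) := by
  have hterm : ∀ i j : Fin d, (ζ ^ ((i : ℕ) * (j : ℕ)))⁻¹ * a i * x ^ ((j : ℕ) * m + r i) =
      a i * x ^ r i * ((ζ ^ (i : ℕ))⁻¹ * ζ ^ (k : ℕ)) ^ (j : ℕ) := fun i j => by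
    rw [pow_add, mul_comm (j : ℕ) m, pow_mul x m, hx, pow_mul ζ, mul_pow, inv_pow]
    ring
  simp_rw [hterm, ← mul_sum, hζ.sum_inv_pow_mul_pow_pow, mul_ite, mul_zero,
    sum_ite_eq', mem_univ, if_true, mul_comm]

end IsPrimitiveRoot

/-- The polynomial form of an index `d` generalized cyclotomic mapping: with
`ζ := ω^m` a primitive `d`-th root of unity, for every `x ∈ F`,
`f_ω(a,r)(x) = (1/d) · Σ_{i,j=0}^{d-1} ζ^{-ij} · a_i · x^{j·m + r_i}`. -/
theorem stmt3 {F : Type*} [Field F] [Fintype F] (ω : Fˣ)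
    (hω : ∀ x : Fˣ, x ∈ Subgroup.zpowers ω)
    (d m : ℕ) (hd : 0 < d) (hdm : d * m = Fintype.card F - 1)
    (a : Fin d → F) (r : Fin d → ℕ) (hr : ∀ i, 1 ≤ r i ∧ r i ≤ m)
    (f : F → F) (hf : IsGCM ω d m a r f) :
    ∀ x : F, f x = (d : F)⁻¹ *
      ∑ i : Fin d, ∑ j : Fin d,
        (((ω : F) ^ m) ^ ((i : ℕ) * (j : ℕ)))⁻¹ * a i * x ^ ((j : ℕ) * m + r i) := by
  classical
  obtain ⟨hf0, hfC⟩ := hf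
  have hcard : Fintype.card Fˣ = d * m := by rw [Fintype.card_units, hdm]
  have hω1 : ω ^ (d * m) = 1 := hcard ▸ pow_card_eq_one
  have hζ : IsPrimitiveRoot ((ω : F) ^ m) d := by
    refine IsPrimitiveRoot.pow (hcard ▸ Fintype.card_pos) ?_ (mul_comm d m)
    rw [IsPrimitiveRoot.coe_units_iff, ← hcard, ← Nat.card_eq_fintype_card,
      ← orderOf_eq_card_of_forall_mem_zpowers hω]
    exact IsPrimitiveRoot.orderOf ω
  have := NeZero.of_pos hd
  have hd0 : (d : F) ≠ 0 := hζ.neZero'.out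
  intro x
  rcases eq_or_ne x 0 with rfl | hx
  · have hmon : ∀ i j : Fin d, (0 : F) ^ ((j : ℕ) * m + r i) = 0 := fun i j =>
      zero_pow (by have := (hr i).1; omega)
    simp [hf0, hmon]
  · lift x to Fˣ using hx.isUnit
    obtain ⟨k, rfl⟩ := mem_powers_iff_mem_zpowers.mpr (hω x)
    have hcoset := pow_mul_inv_pow_mod_pow_eq_one hω1 k
    have hxm : ((ω ^ k : Fˣ) : F) ^ m = ((ω : F) ^ m) ^ (k % d) := by
      rw [← pow_mul, mul_comm, pow_mul]
      exact_mod_cast pow_eq_of_mul_inv_pow_eq_one hcoset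
    rw [hfC _ ⟨k % d, Nat.mod_lt k hd⟩ hcoset,
      hζ.sum_sum_inv_pow_mul_pow_eq a r (k := ⟨k % d, Nat.mod_lt k hd⟩) hxm,
      inv_mul_cancel_left₀ hd0]
end

section
/- Let q be a prime power, d a positive divisor of q−1, ω a primitive root of F_q, and m := (q−1)/d. Let a, a' ∈ F_q^d and let r, r' be tuples of integers with all entries in {1,…,m}. Then the functions f_ω(a,r) and f_ω(a',r') from F_q to F_q are equal if and only if a = a' and r_i = r'_i for every index i ∈ {0,…,d−1} with a_i ≠ 0. -/
open Set

section Group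

variable {G : Type*} [Group G]

theorem pow_injOn_Icc_orderOf (g : G) : InjOn (g ^ ·) (Icc 1 (orderOf g)) := by
  intro s hs t ht h
  have hpred : g ^ (s - 1) = g ^ (t - 1) := by
    apply mul_right_cancel (b := g)
    rw [← pow_succ, ← pow_succ, Nat.sub_add_cancel hs.1, Nat.sub_add_cancel ht.1]
    exact h
  have := pow_injOn_Iio_orderOf (x := g) (show s - 1 < orderOf g by grind)
    (show t - 1 < orderOf g by grind) hpred
  grind

theorem exists_fin_mul_inv_pow_pow_eq_one [Finite G] {ω x : G} (hx : x ∈ Subgroup.zpowers ω)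
    {d m : ℕ} (hd : 0 < d) (hω : ω ^ (d * m) = 1) :
    ∃ i : Fin d, (x * (ω ^ (i : ℕ))⁻¹) ^ m = 1 := by
  obtain ⟨n, rfl⟩ := mem_powers_iff_mem_zpowers.mpr hx
  refine ⟨⟨n % d, Nat.mod_lt n hd⟩, ?_⟩
  have hquot : ω ^ n * (ω ^ (n % d))⁻¹ = ω ^ (d * (n / d)) := by
    rw [mul_inv_eq_iff_eq_mul, ← pow_add, Nat.div_add_mod]
  rw [hquot, ← pow_mul, mul_right_comm, pow_mul, hω, one_pow]

end Group

theorem Units.eq_and_eq_of_mul_pow_eq {F : Type*} [Field F] {a b : F} {s t : ℕ} {u g : Fˣ}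
    (hs : s ∈ Icc 1 (orderOf g)) (ht : t ∈ Icc 1 (orderOf g))
    (hu : a * (u : F) ^ s = b * (u : F) ^ t)
    (hug : a * ((u * g : Fˣ) : F) ^ s = b * ((u * g : Fˣ) : F) ^ t) :
    a = b ∧ (a ≠ 0 → s = t) := by
  obtain rfl | ha := eq_or_ne a 0
  · simp only [zero_mul, eq_comm (a := (0 : F)), mul_eq_zero, pow_eq_zero_iff', Units.ne_zero,
      false_and, or_false] at hu
    exact ⟨hu.symm, fun h => absurd rfl h⟩
  have hb : b * (u : F) ^ t ≠ 0 := hu ▸ mul_ne_zero ha (pow_ne_zero _ u.ne_zero)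
  have hgpow : g ^ s = g ^ t := by
    rw [Units.val_mul, mul_pow, mul_pow, ← mul_assoc, ← mul_assoc, hu] at hug
    exact Units.ext (by simpa using mul_left_cancel₀ hb hug)
  have hst : s = t := pow_injOn_Icc_orderOf g hs ht hgpow
  subst hst
  exact ⟨mul_right_cancel₀ (pow_ne_zero _ u.ne_zero) hu, fun _ => rfl⟩

namespace IsGCM

variable {F : Type*} [Field F] {ω : Fˣ} {d m : ℕ} {a a' : Fin d → F} {r r' : Fin d → ℕ}
  {f f' : F → F}

theorem apply_pow_mul (hf : IsGCM ω d m a r f) (i : Fin d) {y : Fˣ} (hy : y ^ m = 1) :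
    f ((ω ^ (i : ℕ) * y : Fˣ) : F) = a i * ((ω ^ (i : ℕ) * y : Fˣ) : F) ^ r i :=
  hf.2 _ i (by rwa [mul_comm, inv_mul_cancel_left])

theorem eq_and_eq_of_eq (hf : IsGCM ω d m a r f) (hf' : IsGCM ω d m a' r' f) {g : Fˣ}
    (hg : orderOf g = m) (hr : ∀ i, r i ∈ Icc 1 m) (hr' : ∀ i, r' i ∈ Icc 1 m) (i : Fin d) :
    a i = a' i ∧ (a i ≠ 0 → r i = r' i) := by
  have hone := (hf.apply_pow_mul i (one_pow m)).symm.trans (hf'.apply_pow_mul i (one_pow m))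
  rw [mul_one] at hone
  have hgm : g ^ m = 1 := hg ▸ pow_orderOf_eq_one g
  exact Units.eq_and_eq_of_mul_pow_eq (hg ▸ hr i) (hg ▸ hr' i) hone
    ((hf.apply_pow_mul i hgm).symm.trans (hf'.apply_pow_mul i hgm))

theorem eq_of_exponent_eq (hcover : ∀ x : Fˣ, ∃ i : Fin d, (x * (ω ^ (i : ℕ))⁻¹) ^ m = 1)
    (hf : IsGCM ω d m a r f) (hf' : IsGCM ω d m a r' f') (hr : ∀ i, a i ≠ 0 → r i = r' i) :
    f = f' := by
  funext x
  obtain rfl | hx := eq_or_ne x 0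
  · rw [hf.1, hf'.1]
  lift x to Fˣ using hx.isUnit
  obtain ⟨i, hi⟩ := hcover x
  rw [hf.2 x i hi, hf'.2 x i hi]
  obtain ha | ha := eq_or_ne (a i) 0
  · rw [ha, zero_mul, zero_mul]
  · rw [hr i ha]

end IsGCM

theorem stmt4_general {F : Type*} [Field F] [Fintype F] (ω : Fˣ)
    (hω : ∀ x : Fˣ, x ∈ Subgroup.zpowers ω)
    (d m : ℕ) (hdm : d * m = Fintype.card F - 1)
    (a a' : Fin d → F) (r r' : Fin d → ℕ)
    (hr : ∀ i, 1 ≤ r i ∧ r i ≤ m) (hr' : ∀ i, 1 ≤ r' i ∧ r' i ≤ m)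
    (f f' : F → F) (hf : IsGCM ω d m a r f) (hf' : IsGCM ω d m a' r' f') :
    f = f' ↔ (a = a' ∧ ∀ i, a i ≠ 0 → r i = r' i) := by
  have hd : 0 < d := Nat.pos_of_ne_zero fun h => by
    have := Fintype.one_lt_card (α := F)
    rw [h, zero_mul] at hdm
    omega
  have hord : orderOf ω = d * m := by
    rw [orderOf_eq_card_of_forall_mem_zpowers hω, Nat.card_units, Nat.card_eq_fintype_card, hdm]
  have hgen : orderOf (ω ^ d) = m := by
    rw [orderOf_pow_of_dvd hd.ne' (hord ▸ dvd_mul_right d m), hord, Nat.mul_div_cancel_left m hd]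
  constructor
  · rintro rfl
    have h := hf.eq_and_eq_of_eq hf' hgen hr hr'
    exact ⟨funext fun i => (h i).1, fun i => (h i).2⟩
  · rintro ⟨rfl, h⟩
    exact hf.eq_of_exponent_eq
      (fun x => exists_fin_mul_inv_pow_pow_eq_one (hω x) hd (hord ▸ pow_orderOf_eq_one ω)) hf' h

/-- Two index `d` generalized cyclotomic mappings `f_ω(a,r)` and `f_ω(a',r')` (with all
exponents in `{1,…,m}`) are equal as functions if and only if `a = a'` and `r i = r' i`
for every index `i` with `a i ≠ 0`. -/
theorem stmt4 {F : Type*} [Field F] [Fintype F] (ω : Fˣ)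
    (hω : ∀ x : Fˣ, x ∈ Subgroup.zpowers ω)
    (d m : ℕ) (hd : 0 < d) (hdm : d * m = Fintype.card F - 1)
    (a a' : Fin d → F) (r r' : Fin d → ℕ)
    (hr : ∀ i, 1 ≤ r i ∧ r i ≤ m) (hr' : ∀ i, 1 ≤ r' i ∧ r' i ≤ m)
    (f f' : F → F) (hf : IsGCM ω d m a r f) (hf' : IsGCM ω d m a' r' f') :
    f = f' ↔ (a = a' ∧ ∀ i, a i ≠ 0 → r i = r' i) :=
  stmt4_general ω hω d m hdm a a' r r' hr hr' f f' hf hf'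
end

section
/- (Pólya) Let Ω be a finite nonempty set, d a positive integer, G a subgroup of the symmetric group Sym(Ω), and P a subgroup of the symmetric group on {0,…,d−1}. Then, in ℚ[x_1,x_2,x_3,…], the equality (1/(|P|·|G|^d))·Σ_{ψ∈P} Σ_{g : {0,…,d−1}→G} CT(w(ψ,g)) = CI(P)[x_1 := CI^{(1)}(G), x_2 := CI^{(2)}(G), …, x_d := CI^{(d)}(G)] holds; that is, the cycle index of the imprimitive wreath product G ≀ P (the group of all permutations w(ψ,g) of Ω×{0,…,d−1} with ψ ∈ P and g_0,…,g_{d−1} ∈ G) is obtained from the cycle index of P by substituting, for each variable x_m (1 ≤ m ≤ d), the polynomial CI^{(m)}(G). -/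
open MvPolynomial

/-- The number of cycles of length `ℓ` of a permutation `σ` of a finite set
(fixed points counting as cycles of length `1`): the number of points whose
`σ`-orbit has size `ℓ`, divided by `ℓ`. -/
noncomputable def cycCount {Λ : Type*} (σ : Equiv.Perm Λ) (ℓ : ℕ) : ℕ :=
  Nat.card {x : Λ // Function.minimalPeriod (fun y => σ y) x = ℓ} / ℓ

/-- The cycle type monomial `CT(σ) = ∏_ℓ x_ℓ^{c_ℓ(σ)}` of a permutation of a finite set,
as an element of `ℚ[x_1, x_2, …]` (variables indexed by `ℕ`). -/
noncomputable def CT {Λ : Type*} (σ : Equiv.Perm Λ) : MvPolynomial ℕ ℚ :=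
  ∏ ℓ ∈ Finset.Icc 1 (Nat.card Λ), (X ℓ) ^ cycCount σ ℓ

/-- The cycle index `CI(H) = |H|⁻¹ · Σ_{σ ∈ H} CT(σ)` of a (finite, nonempty) set of
permutations of a finite set. -/
noncomputable def CI {Λ : Type*} (H : Set (Equiv.Perm Λ)) : MvPolynomial ℕ ℚ :=
  (Nat.card H : ℚ)⁻¹ • ∑ᶠ σ ∈ H, CT σ

/-- The imprimitive wreath element `w(ψ,g)`: the permutation of `Ω × {0,…,d−1}` given by
`(x,i) ↦ (g_{ψ(i)}(x), ψ(i))`. -/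
def wreath {Ω : Type*} (d : ℕ) (ψ : Equiv.Perm (Fin d)) (g : Fin d → Equiv.Perm Ω) :
    Equiv.Perm (Ω × Fin d) where
  toFun p := (g (ψ p.2) p.1, ψ p.2)
  invFun p := ((g p.2)⁻¹ p.1, ψ⁻¹ p.2)
  left_inv p := by simp
  right_inv p := by simp

/-!
Splitting off one cycle of `ψ` at a time writes the index set as a sum `I ⊕ J`, along which
both `w(ψ, g)` and the cycle type monomial factor; so it suffices to treat a cyclic `ψ` of
length `m`. Then `w(ψ, g)^m` preserves each fibre `Ω × {i}` and acts on it by a conjugate of the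
cycle product `g (ψ^[m] i) * ⋯ * g (ψ i)`, so the cycles of `w(ψ, g)` are those of one cycle
product, stretched by the factor `m`: `CT(w(ψ, g))` is `CT` of that product with `x_ℓ ↦ x_{ℓm}`.
As `g` ranges over `G^m`, the cycle product takes every value in `G` exactly `|G|^(m-1)` times,
which gives `|G|^m • CI^{(m)}(G)`.
-/

open Function Equiv

theorem Function.Semiconj.minimalPeriod_eq {α β : Type*} {f : α → β} (hf : Injective f)
    {ga : α → α} {gb : β → β} (h : Semiconj f ga gb) (x : α) :
    minimalPeriod gb (f x) = minimalPeriod ga x :=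
  minimalPeriod_eq_minimalPeriod_iff.2 fun n => by
    simp only [IsPeriodicPt, IsFixedPt, ← (h.iterate_right n).eq x, hf.eq_iff]

noncomputable def periodCount {Λ : Type*} (σ : Perm Λ) (ℓ : ℕ) : ℕ :=
  Nat.card {x : Λ // minimalPeriod σ x = ℓ}

theorem cycCount_eq_periodCount_div {Λ : Type*} (σ : Perm Λ) (ℓ : ℕ) :
    cycCount σ ℓ = periodCount σ ℓ / ℓ := rfl

section PeriodCount

variable {α β : Type*}

theorem periodCount_eq_of_semiconj (e : α ≃ β) {σ : Perm α} {τ : Perm β}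
    (h : Semiconj e σ τ) (ℓ : ℕ) : periodCount τ ℓ = periodCount σ ℓ :=
  Nat.card_congr <| e.symm.subtypeEquiv fun y => by
    rw [← h.minimalPeriod_eq e.injective, e.apply_symm_apply]

theorem periodCount_sumCongr [Finite α] [Finite β] (σ : Perm α) (τ : Perm β) (ℓ : ℕ) :
    periodCount (sumCongr σ τ) ℓ = periodCount σ ℓ + periodCount τ ℓ := by
  have hl := (show Semiconj Sum.inl σ (sumCongr σ τ) from fun _ => rfl).minimalPeriod_eq
    Sum.inl_injective
  have hr := (show Semiconj Sum.inr τ (sumCongr σ τ) from fun _ => rfl).minimalPeriod_eq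
    Sum.inr_injective
  rw [periodCount, periodCount, periodCount, ← Nat.card_sum]
  exact Nat.card_congr <| subtypeSum.trans <| sumCongr
    (subtypeEquivRight fun x => by rw [hl]) (subtypeEquivRight fun x => by rw [hr])

theorem periodCount_le_card [Finite α] (σ : Perm α) (ℓ : ℕ) : periodCount σ ℓ ≤ Nat.card α :=
  Nat.card_le_card_of_injective _ Subtype.val_injective

theorem minimalPeriod_eq_card_of_sameCycle [Finite α] {ψ : Perm α}
    (hψ : ∀ i j, ψ.SameCycle i j) (i : α) : minimalPeriod ψ i = Nat.card α := by
  have := Fintype.ofFinite α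
  classical
  have horbit : MulAction.orbit (Subgroup.zpowers ψ) i = Set.univ :=
    Set.eq_univ_of_forall fun j => by
      obtain ⟨k, hk⟩ := hψ i j
      exact ⟨⟨ψ ^ k, Subgroup.zpow_mem_zpowers ψ k⟩, hk⟩
  rw [show (ψ : α → α) = (ψ • ·) from rfl, MulAction.minimalPeriod_eq_card,
    ← Nat.card_eq_fintype_card, horbit, Nat.card_univ]

theorem periodCount_of_sameCycle [Finite α] {ψ : Perm α} (hψ : ∀ i j, ψ.SameCycle i j)
    (ℓ : ℕ) : periodCount ψ ℓ = if ℓ = Nat.card α then Nat.card α else 0 := by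
  simp only [periodCount, minimalPeriod_eq_card_of_sameCycle hψ]
  split_ifs with h
  · rw [h, Nat.card_congr (Equiv.subtypeUnivEquiv fun _ => rfl)]
  · have : IsEmpty {x : α // Nat.card α = ℓ} := ⟨fun x => h x.2.symm⟩
    exact Nat.card_of_isEmpty

end PeriodCount

universe u

theorem Equiv.Perm.induction_on_sameCycle
    {motive : ∀ {I : Type u} [Fintype I] [DecidableEq I], Perm I → Prop}
    (isEmpty : ∀ {I : Type u} [Fintype I] [DecidableEq I] [IsEmpty I] (ψ : Perm I), motive ψ)
    (semiconj : ∀ {I J : Type u} [Fintype I] [DecidableEq I] [Fintype J] [DecidableEq J]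
      (e : I ≃ J) {ψ : Perm I} {ψ' : Perm J}, Semiconj e ψ ψ' → motive ψ → motive ψ')
    (sum : ∀ {I J : Type u} [Fintype I] [DecidableEq I] [Nonempty I] [Fintype J] [DecidableEq J]
      (ψ₁ : Perm I) (ψ₂ : Perm J), (∀ i j, ψ₁.SameCycle i j) → motive ψ₂ →
        motive (sumCongr ψ₁ ψ₂))
    {I : Type u} [Fintype I] [DecidableEq I] (ψ : Perm I) : motive ψ := by
  induction h : Fintype.card I using Nat.strong_induction_on generalizing I with
  | _ n ih =>
  cases isEmpty_or_nonempty I with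
  | inl _ => exact isEmpty ψ
  | inr hI =>
  obtain ⟨i₀⟩ := id hI
  let p := ψ.SameCycle i₀
  have hp (j : I) : p (ψ j) ↔ p j := sameCycle_apply_right
  have hnp (j : I) : ¬p (ψ j) ↔ ¬p j := not_congr (hp j)
  have : Nonempty {j // p j} := ⟨⟨i₀, SameCycle.refl ψ i₀⟩⟩
  refine semiconj (sumCompl p) (ψ := sumCongr (ψ.subtypePerm hp) (ψ.subtypePerm hnp))
    (by rintro (j | j) <;> rfl) (sum _ _ (fun j j' => ?_) (ih _ ?_ _ rfl))
  · exact sameCycle_subtypePerm.2 (j.2.symm.trans j'.2)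
  · rw [← h, Fintype.card_subtype_compl]
    exact Nat.sub_lt Fintype.card_pos (Fintype.card_pos_iff.2 ⟨⟨i₀, SameCycle.refl ψ i₀⟩⟩)

theorem dvd_periodCount {α : Type*} [Finite α] (σ : Perm α) (ℓ : ℕ) : ℓ ∣ periodCount σ ℓ := by
  have := Fintype.ofFinite α
  classical
  refine Equiv.Perm.induction_on_sameCycle (motive := fun ψ => ∀ ℓ, ℓ ∣ periodCount ψ ℓ)
    (fun ψ ℓ => ?_) (fun e _ _ h ih ℓ => ?_) (fun ψ₁ ψ₂ h₁ ih ℓ => ?_) σ ℓ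
  · simp [periodCount]
  · rw [periodCount_eq_of_semiconj e h]; exact ih ℓ
  · rw [periodCount_sumCongr, periodCount_of_sameCycle h₁]
    split_ifs with h <;> simp [h, ih]

section CycleType

variable {α β : Type*}

theorem cycCount_eq_of_semiconj (e : α ≃ β) {σ : Perm α} {τ : Perm β} (h : Semiconj e σ τ)
    (ℓ : ℕ) : cycCount τ ℓ = cycCount σ ℓ := by
  rw [cycCount_eq_periodCount_div, cycCount_eq_periodCount_div,
    periodCount_eq_of_semiconj e h]

theorem cycCount_sumCongr [Finite α] [Finite β] (σ : Perm α) (τ : Perm β) (ℓ : ℕ) :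
    cycCount (sumCongr σ τ) ℓ = cycCount σ ℓ + cycCount τ ℓ := by
  simp only [cycCount_eq_periodCount_div, periodCount_sumCongr,
    Nat.add_div_of_dvd_right (dvd_periodCount σ ℓ)]

theorem mem_Icc_of_cycCount_ne_zero [Finite α] {σ : Perm α} {ℓ : ℕ} (h : cycCount σ ℓ ≠ 0) :
    ℓ ∈ Finset.Icc 1 (Nat.card α) := by
  rw [cycCount_eq_periodCount_div, Ne, Nat.div_eq_zero_iff, not_or, not_lt] at h
  exact Finset.mem_Icc.2 ⟨Nat.one_le_iff_ne_zero.2 h.1, h.2.trans (periodCount_le_card σ ℓ)⟩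

theorem CT_eq_prod_of_subset [Finite α] (σ : Perm α) {s : Finset ℕ}
    (hs : ∀ ℓ, cycCount σ ℓ ≠ 0 → ℓ ∈ s) : CT σ = ∏ ℓ ∈ s, X ℓ ^ cycCount σ ℓ := by
  classical
  let u := (Finset.Icc 1 (Nat.card α)).filter (cycCount σ · ≠ 0)
  have hu {t : Finset ℕ} (ht : u ⊆ t) :
      ∏ ℓ ∈ t, (X ℓ : MvPolynomial ℕ ℚ) ^ cycCount σ ℓ = ∏ ℓ ∈ u, X ℓ ^ cycCount σ ℓ :=
    (Finset.prod_subset ht fun ℓ _ hℓ => by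
      rw [not_imp_comm.1 (fun h => Finset.mem_filter.2 ⟨mem_Icc_of_cycCount_ne_zero h, h⟩) hℓ,
        pow_zero]).symm
  rw [CT, hu (Finset.filter_subset _ _), hu fun ℓ hℓ => hs ℓ (Finset.mem_filter.1 hℓ).2]

theorem CT_eq_of_semiconj [Finite α] (e : α ≃ β) {σ : Perm α} {τ : Perm β}
    (h : Semiconj e σ τ) : CT τ = CT σ := by
  rw [CT, CT, Nat.card_congr e.symm]
  simp only [cycCount_eq_of_semiconj e h]

theorem CT_sumCongr [Finite α] [Finite β] (σ : Perm α) (τ : Perm β) :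
    CT (sumCongr σ τ) = CT σ * CT τ := by
  have hα : Nat.card α ≤ Nat.card (α ⊕ β) := by rw [Nat.card_sum]; omega
  have hβ : Nat.card β ≤ Nat.card (α ⊕ β) := by rw [Nat.card_sum]; omega
  rw [CT, CT_eq_prod_of_subset σ fun ℓ h => Finset.Icc_subset_Icc_right hα
      (mem_Icc_of_cycCount_ne_zero h),
    CT_eq_prod_of_subset τ fun ℓ h => Finset.Icc_subset_Icc_right hβ
      (mem_Icc_of_cycCount_ne_zero h), ← Finset.prod_mul_distrib]
  simp only [cycCount_sumCongr, pow_add]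

theorem CT_of_sameCycle [Finite α] [Nonempty α] {ψ : Perm α} (hψ : ∀ i j, ψ.SameCycle i j) :
    CT ψ = X (Nat.card α) := by
  have hcyc (ℓ : ℕ) : cycCount ψ ℓ = if ℓ = Nat.card α then 1 else 0 := by
    rw [cycCount_eq_periodCount_div, periodCount_of_sameCycle hψ]
    split_ifs with h
    · rw [h]; exact Nat.div_self Nat.card_pos
    · exact Nat.zero_div ℓ
  rw [CT_eq_prod_of_subset ψ (s := {Nat.card α}) fun ℓ h => by simpa [hcyc] using h,
    Finset.prod_singleton, hcyc, if_pos rfl, pow_one]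

theorem CT_eq_rename_of_periodCount [Finite α] [Finite β] {σ : Perm α} {τ : Perm β} {m : ℕ}
    (hm : 0 < m) (hdvd : ∀ L, periodCount τ L ≠ 0 → m ∣ L)
    (hmul : ∀ ℓ, periodCount τ (ℓ * m) = m * periodCount σ ℓ) :
    CT τ = rename (· * m) (CT σ) := by
  have hcyc (ℓ : ℕ) : cycCount τ (ℓ * m) = cycCount σ ℓ := by
    rw [cycCount_eq_periodCount_div, cycCount_eq_periodCount_div, hmul, mul_comm ℓ,
      Nat.mul_div_mul_left _ _ hm]
  have hsupp (L) (h : cycCount τ L ≠ 0) : L ∈ (Finset.Icc 1 (Nat.card α)).image (· * m) := by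
    obtain ⟨ℓ, rfl⟩ := hdvd L fun h0 => h (by rw [cycCount_eq_periodCount_div, h0, Nat.zero_div])
    rw [mul_comm, hcyc] at h
    exact mul_comm ℓ m ▸ Finset.mem_image_of_mem (· * m) (mem_Icc_of_cycCount_ne_zero h)
  rw [CT_eq_prod_of_subset τ hsupp, CT, map_prod,
    Finset.prod_image fun a _ b _ hab => Nat.eq_of_mul_eq_mul_right hm hab]
  simp only [hcyc, map_pow, rename_X]

end CycleType

def cycleProd {I M : Type*} [Monoid M] (ψ : I → I) (g : I → M) : ℕ → I → M
  | 0, _ => 1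
  | k + 1, i => g (ψ^[k + 1] i) * cycleProd ψ g k i

section CycleProd

variable {I M : Type*} [Monoid M] {ψ : I → I} (g : I → M)

theorem cycleProd_add (a b : ℕ) (i : I) :
    cycleProd ψ g (a + b) i = cycleProd ψ g b (ψ^[a] i) * cycleProd ψ g a i := by
  induction b with
  | zero => simp [cycleProd]
  | succ b ih =>
    rw [← add_assoc, cycleProd, cycleProd, ih, ← iterate_add_apply, mul_assoc]
    congr 3
    omega

theorem cycleProd_mul {m : ℕ} {i : I} (h : IsPeriodicPt ψ m i) (q : ℕ) :
    cycleProd ψ g (m * q) i = cycleProd ψ g m i ^ q := by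
  induction q with
  | zero => simp [cycleProd]
  | succ q ih => rw [Nat.mul_succ, cycleProd_add, (h.mul_const q).eq, ih, pow_succ']

theorem cycleProd_apply_mul {m : ℕ} {i : I} (h : IsPeriodicPt ψ m i) :
    cycleProd ψ g m (ψ i) * g (ψ i) = g (ψ i) * cycleProd ψ g m i := by
  have h1 : cycleProd ψ g (1 + m) i = cycleProd ψ g m (ψ i) * g (ψ i) := by
    rw [cycleProd_add]; simp [cycleProd]
  have h2 : cycleProd ψ g (m + 1) i = g (ψ i) * cycleProd ψ g m i := by
    rw [cycleProd, iterate_succ_apply', h.eq]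
  rw [← h1, ← h2, add_comm]

theorem cycleProd_update [DecidableEq I] {i₀ i : I} {k : ℕ}
    (h : ∀ j, 0 < j → j ≤ k → ψ^[j] i ≠ i₀) (a : M) :
    cycleProd ψ (update g i₀ a) k i = cycleProd ψ g k i := by
  induction k with
  | zero => rfl
  | succ k ih =>
    rw [cycleProd, cycleProd, update_of_ne (h _ k.succ_pos le_rfl),
      ih fun j hj hjk => h j hj (hjk.trans k.le_succ)]

theorem map_cycleProd {N : Type*} [Monoid N] (f : M →* N) (k : ℕ) (i : I) :
    f (cycleProd ψ g k i) = cycleProd ψ (f ∘ g) k i := by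
  induction k with
  | zero => exact f.map_one
  | succ k ih => rw [cycleProd, cycleProd, map_mul, ih, comp_apply]

end CycleProd

def wreathPerm {Ω I : Type*} (ψ : Perm I) (g : I → Perm Ω) : Perm (Ω × I) where
  toFun p := (g (ψ p.2) p.1, ψ p.2)
  invFun p := ((g p.2)⁻¹ p.1, ψ⁻¹ p.2)
  left_inv p := by simp
  right_inv p := by simp

section WreathPerm

variable {Ω I : Type*} {ψ : Perm I} (g : I → Perm Ω)

theorem wreathPerm_iterate (k : ℕ) (x : Ω) (i : I) :
    (wreathPerm ψ g)^[k] (x, i) = (cycleProd ψ g k i x, ψ^[k] i) := by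
  induction k with
  | zero => rfl
  | succ k ih =>
    rw [iterate_succ_apply', ih, cycleProd, Perm.mul_apply, iterate_succ_apply' ψ]
    rfl

theorem minimalPeriod_wreathPerm (x : Ω) (i : I) :
    minimalPeriod (wreathPerm ψ g) (x, i) =
      minimalPeriod ψ i * minimalPeriod ⇑(cycleProd ψ g (minimalPeriod ψ i) i) x := by
  set m := minimalPeriod ψ i
  set τ := cycleProd ψ g m i
  have hm : IsPeriodicPt ψ m i := isPeriodicPt_minimalPeriod ψ i
  have key (n : ℕ) : IsPeriodicPt (wreathPerm ψ g) n (x, i) ↔ m * minimalPeriod τ x ∣ n := by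
    rw [IsPeriodicPt, IsFixedPt, wreathPerm_iterate, Prod.ext_iff]
    refine ⟨fun ⟨hx, hi⟩ => ?_, fun ⟨q, hq⟩ => ?_⟩
    · obtain ⟨q, rfl⟩ := IsPeriodicPt.minimalPeriod_dvd (f := ψ) hi
      rw [cycleProd_mul g hm, ← Perm.iterate_eq_pow] at hx
      exact mul_dvd_mul_left m (IsPeriodicPt.minimalPeriod_dvd hx)
    · rw [hq, mul_assoc, cycleProd_mul g hm, ← Perm.iterate_eq_pow]
      exact ⟨((isPeriodicPt_minimalPeriod τ x).mul_const q).eq, (hm.mul_const _).eq⟩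
  exact Nat.dvd_antisymm ((key _).2 dvd_rfl).minimalPeriod_dvd
    ((key _).1 (isPeriodicPt_minimalPeriod _ _))

variable [Finite I]

theorem periodCount_cycleProd_of_sameCycle (hψ : ∀ i j, ψ.SameCycle i j) (i j : I) (ℓ : ℕ) :
    periodCount (cycleProd ψ g (Nat.card I) j) ℓ =
      periodCount (cycleProd ψ g (Nat.card I) i) ℓ := by
  obtain ⟨k, rfl⟩ := (hψ i j).exists_nat_pow_eq
  induction k with
  | zero => rfl
  | succ k ih =>
    set j := (ψ ^ k) i
    have hj : IsPeriodicPt ψ (Nat.card I) j :=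
      minimalPeriod_eq_card_of_sameCycle hψ j ▸ isPeriodicPt_minimalPeriod ψ j
    rw [pow_succ', Perm.mul_apply, ← ih]
    refine periodCount_eq_of_semiconj (g (ψ j)) (fun x => ?_) ℓ
    exact (congrArg (· x) (cycleProd_apply_mul g hj)).symm

theorem CT_wreathPerm_of_sameCycle [Finite Ω] (hψ : ∀ i j, ψ.SameCycle i j) (i₀ : I) :
    CT (wreathPerm ψ g) = rename (· * Nat.card I) (CT (cycleProd ψ g (Nat.card I) i₀)) := by
  have := Fintype.ofFinite I
  have hm : 0 < Nat.card I := Nat.card_pos_iff.2 ⟨⟨i₀⟩, inferInstance⟩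
  have hmp (p : Ω × I) : minimalPeriod (wreathPerm ψ g) p =
      Nat.card I * minimalPeriod ⇑(cycleProd ψ g (Nat.card I) p.2) p.1 := by
    rw [minimalPeriod_wreathPerm, minimalPeriod_eq_card_of_sameCycle hψ]
  refine CT_eq_rename_of_periodCount hm (fun L hL => ?_) (fun ℓ => ?_)
  · obtain ⟨p, hp⟩ := Nat.card_ne_zero.1 hL |>.1
    exact ⟨_, hp ▸ hmp p⟩
  · have e : {p : Ω × I // minimalPeriod (wreathPerm ψ g) p = ℓ * Nat.card I} ≃
        Σ i : I, {x : Ω // minimalPeriod ⇑(cycleProd ψ g (Nat.card I) i) x = ℓ} :=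
      (subtypeEquiv (prodComm Ω I) fun p => by
        rw [hmp, mul_comm ℓ, Nat.mul_left_cancel_iff hm]; rfl).trans
        (subtypeProdEquivSigmaSubtype fun i x => minimalPeriod ⇑(cycleProd ψ g _ i) x = ℓ)
    rw [periodCount, Nat.card_congr e, Nat.card_sigma]
    change ∑ i, periodCount (cycleProd ψ g (Nat.card I) i) ℓ = _
    rw [Finset.sum_congr rfl fun i _ => periodCount_cycleProd_of_sameCycle g hψ i₀ i ℓ,
      Finset.sum_const, Finset.card_univ, smul_eq_mul, Nat.card_eq_fintype_card]

end WreathPerm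

theorem finsum_mem_subgroup_eq_sum {M A : Type*} [Group M] [AddCommMonoid A] (H : Subgroup M)
    [Fintype H] (f : M → A) : ∑ᶠ x ∈ (H : Set M), f x = ∑ x : H, f x := by
  rw [← finsum_set_coe_eq_finsum_mem, finsum_eq_sum_of_fintype]
  rfl

theorem sum_CT_eq_card_smul_CI {Ω : Type*} (G : Subgroup (Perm Ω)) [Fintype G] :
    ∑ σ : G, CT (σ : Perm Ω) = (Nat.card G : ℚ) • CI (G : Set (Perm Ω)) := by
  rw [CI, finsum_mem_subgroup_eq_sum, smul_smul, SetLike.coe_sort_coe,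
    mul_inv_cancel₀ (Nat.cast_ne_zero.2 Nat.card_pos.ne'), one_smul]

/-- The substitution `g ↦ update g i₀ (g i₀ * c g)` is a bijection when `c` ignores the
coordinate `i₀`. -/
theorem sum_apply_mul_of_update {I M A : Type*} [Fintype I] [DecidableEq I] [Group M]
    [Fintype M] [AddCommMonoid A] (i₀ : I) {c : (I → M) → M}
    (hc : ∀ g a, c (update g i₀ a) = c g) (φ : M → A) :
    ∑ g, φ (g i₀ * c g) = Fintype.card M ^ (Fintype.card I - 1) • ∑ σ, φ σ := by
  let T : (I → M) ≃ (I → M) :=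
    { toFun := fun g => update g i₀ (g i₀ * c g)
      invFun := fun g => update g i₀ (g i₀ * (c g)⁻¹)
      left_inv := fun g => by simp [hc]
      right_inv := fun g => by simp [hc] }
  calc ∑ g : I → M, φ (g i₀ * c g) = ∑ g, φ (T g i₀) := by simp [T]
    _ = ∑ g : I → M, φ (g i₀) := T.sum_comp fun g => φ (g i₀)
    _ = _ := by simpa using Fintype.sum_piFinset_apply φ Finset.univ i₀

noncomputable def wreathCT {Ω I : Type*} (G : Subgroup (Perm Ω)) [Fintype G] [Fintype I]
    [DecidableEq I] (ψ : Perm I) : MvPolynomial ℕ ℚ :=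
  ∑ g : I → G, CT (wreathPerm ψ fun i => (g i : Perm Ω))

theorem wreathCT_of_isEmpty {Ω I : Type*} (G : Subgroup (Perm Ω)) [Fintype G] [Fintype I]
    [DecidableEq I] [IsEmpty I] (ψ : Perm I) : wreathCT G ψ = 1 := by
  simp [wreathCT, CT]

section WreathCT

variable {Ω : Type*} [Finite Ω] (G : Subgroup (Perm Ω)) [Fintype G]

theorem wreathCT_of_sameCycle {I : Type*} [Fintype I] [DecidableEq I] [Nonempty I]
    {ψ : Perm I} (hψ : ∀ i j, ψ.SameCycle i j) :
    wreathCT G ψ =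
      (Nat.card G : ℚ) ^ Nat.card I • rename (· * Nat.card I) (CI (G : Set (Perm Ω))) := by
  obtain ⟨i₀⟩ := ‹Nonempty I›
  set m := Nat.card I
  have hperiod : minimalPeriod ψ i₀ = m := minimalPeriod_eq_card_of_sameCycle hψ i₀
  obtain ⟨k, hk⟩ : ∃ k, m = k + 1 := Nat.exists_eq_add_one.2 Nat.card_pos
  have hfactor (g : I → G) : cycleProd ψ g m i₀ = g i₀ * cycleProd ψ g k i₀ := by
    rw [hk, cycleProd, ← hk, ← hperiod, iterate_minimalPeriod]
  have hupdate (g : I → G) (a : G) : cycleProd ψ (update g i₀ a) k i₀ = cycleProd ψ g k i₀ :=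
    cycleProd_update g (fun j hj hjk h => by
      have := (show IsPeriodicPt ψ j i₀ from h).minimalPeriod_le hj
      omega) a
  calc wreathCT G ψ
      _ = ∑ g : I → G, rename (· * m) (CT ((cycleProd ψ g m i₀ : G) : Perm Ω)) := by
        refine Finset.sum_congr rfl fun g _ => ?_
        rw [CT_wreathPerm_of_sameCycle _ hψ i₀, ← Subgroup.coe_subtype, map_cycleProd]
        rfl
      _ = ∑ g : I → G, rename (· * m) (CT ((g i₀ * cycleProd ψ g k i₀ : G) : Perm Ω)) := by
        simp only [hfactor]
      _ = Fintype.card G ^ (Fintype.card I - 1) • ∑ σ : G, rename (· * m) (CT (σ : Perm Ω)) :=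
        sum_apply_mul_of_update i₀ hupdate fun σ : G => rename (· * m) (CT (σ : Perm Ω))
      _ = _ := by
        rw [← map_sum, sum_CT_eq_card_smul_CI, map_smul, ← Nat.cast_smul_eq_nsmul ℚ, smul_smul,
          ← Nat.card_eq_fintype_card, ← Nat.card_eq_fintype_card, Nat.cast_pow, ← pow_succ,
          Nat.sub_add_cancel Nat.card_pos]

theorem wreathCT_eq_of_semiconj {I J : Type*} [Fintype I] [DecidableEq I] [Fintype J]
    [DecidableEq J] (e : I ≃ J) {ψ : Perm I} {ψ' : Perm J} (h : Semiconj e ψ ψ') :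
    wreathCT G ψ' = wreathCT G ψ := by
  rw [wreathCT, ← (e.arrowCongr (Equiv.refl G)).sum_comp, wreathCT]
  refine Finset.sum_congr rfl fun g _ => CT_eq_of_semiconj (prodCongr (Equiv.refl Ω) e) ?_
  rintro ⟨x, i⟩
  simp [wreathPerm, ← h.eq]

theorem wreathCT_sumCongr {I J : Type*} [Fintype I] [DecidableEq I] [Fintype J]
    [DecidableEq J] (ψ₁ : Perm I) (ψ₂ : Perm J) :
    wreathCT G (sumCongr ψ₁ ψ₂) = wreathCT G ψ₁ * wreathCT G ψ₂ := by
  rw [wreathCT, ← (sumArrowEquivProdArrow I J G).symm.sum_comp, Fintype.sum_prod_type,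
    wreathCT, wreathCT, Fintype.sum_mul_sum]
  refine Finset.sum_congr rfl fun g₁ _ => Finset.sum_congr rfl fun g₂ _ => ?_
  rw [← CT_sumCongr]
  exact (CT_eq_of_semiconj (prodSumDistrib Ω I J) (by rintro ⟨x, i | j⟩ <;> rfl)).symm

theorem wreathCT_eq {I : Type u} [Fintype I] [DecidableEq I] (ψ : Perm I) :
    wreathCT G ψ = (Nat.card G : ℚ) ^ Nat.card I •
      bind₁ (fun ℓ => rename (· * ℓ) (CI (G : Set (Perm Ω)))) (CT ψ) := by
  refine Equiv.Perm.induction_on_sameCycle (motive := fun {I} _ _ ψ => wreathCT G ψ =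
      (Nat.card G : ℚ) ^ Nat.card I •
        bind₁ (fun ℓ => rename (· * ℓ) (CI (G : Set (Perm Ω)))) (CT ψ))
    (fun ψ => ?_) (fun e _ _ h ih => ?_) (fun ψ₁ ψ₂ h₁ ih => ?_) ψ
  · simp [wreathCT_of_isEmpty, CT]
  · rw [wreathCT_eq_of_semiconj G e h, ih, CT_eq_of_semiconj e h, Nat.card_congr e]
  · rw [wreathCT_sumCongr, wreathCT_of_sameCycle G h₁, ih, CT_sumCongr, CT_of_sameCycle h₁,
      map_mul, bind₁_X_right, Nat.card_sum, pow_add, smul_mul_smul_comm]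

end WreathCT

theorem stmt5_general {Ω : Type*} [Fintype Ω] (d : ℕ)
    (G : Subgroup (Equiv.Perm Ω)) (P : Subgroup (Equiv.Perm (Fin d))) :
    ((Nat.card P : ℚ) * (Nat.card G : ℚ) ^ d)⁻¹ •
        ∑ᶠ ψ ∈ (P : Set (Equiv.Perm (Fin d))),
          ∑ᶠ g : Fin d → G, CT (wreath d ψ (fun i => (g i : Equiv.Perm Ω)))
      = MvPolynomial.bind₁
          (fun ℓ => MvPolynomial.rename (fun j => j * ℓ) (CI (G : Set (Equiv.Perm Ω))))
          (CI (P : Set (Equiv.Perm (Fin d)))) := by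
  have := Fintype.ofFinite G
  have := Fintype.ofFinite P
  have hG : (Nat.card G : ℚ) ^ d ≠ 0 := pow_ne_zero d (Nat.cast_ne_zero.2 Nat.card_pos.ne')
  have hsum (ψ : Perm (Fin d)) :
      ∑ᶠ g : Fin d → G, CT (wreath d ψ (fun i => (g i : Perm Ω))) = wreathCT G ψ :=
    finsum_eq_sum_of_fintype _
  rw [finsum_mem_subgroup_eq_sum, CI.eq_1 (P : Set (Perm (Fin d))), finsum_mem_subgroup_eq_sum,
    map_smul, map_sum]
  simp only [hsum, wreathCT_eq, Nat.card_fin, ← Finset.smul_sum, smul_smul, mul_inv,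
    mul_assoc, inv_mul_cancel₀ hG, mul_one, SetLike.coe_sort_coe]

/-- Pólya's theorem: the cycle index of the imprimitive wreath product `G ≀ P` of
permutation groups `G ≤ Sym(Ω)` and `P ≤ Sym(d)` equals the cycle index of `P` with each
variable `x_m` replaced by `CI^{(m)}(G)` (the cycle index of `G` with each `x_ℓ`
replaced by `x_{ℓ·m}`). -/
theorem stmt5 {Ω : Type*} [Fintype Ω] [Nonempty Ω] (d : ℕ) (hd : 0 < d)
    (G : Subgroup (Equiv.Perm Ω)) (P : Subgroup (Equiv.Perm (Fin d))) :
    ((Nat.card P : ℚ) * (Nat.card G : ℚ) ^ d)⁻¹ •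
        ∑ᶠ ψ ∈ (P : Set (Equiv.Perm (Fin d))),
          ∑ᶠ g : Fin d → G, CT (wreath d ψ (fun i => (g i : Equiv.Perm Ω)))
      = MvPolynomial.bind₁
          (fun ℓ => MvPolynomial.rename (fun j => j * ℓ) (CI (G : Set (Equiv.Perm Ω))))
          (CI (P : Set (Equiv.Perm (Fin d)))) :=
  stmt5_general d G P
end

section
/- Let p be a prime, k a positive integer, a ∈ (ℤ/p^kℤ)ˣ and b ∈ ℤ/p^kℤ, and let A := λ(a,b) be the permutation x ↦ ax+b of ℤ/p^kℤ. Then the order of A as a permutation equals ord(a)·addord(b·(1 + a + a² + ⋯ + a^{ord(a)−1})), where ord(a) is the multiplicative order of a and addord denotes the additive order in ℤ/p^kℤ (with addord(0) = 1). -/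
/-
The `t`-th power of `λ(a,b)` is `x ↦ aᵗ x + b (1 + a + ⋯ + aᵗ⁻¹)`, so it is the identity exactly
when `aᵗ = 1` and `b (1 + a + ⋯ + aᵗ⁻¹) = 0`. The first condition says `t = ord(a) · q`, and then
periodicity of the powers of `a` turns the geometric sum into `q · S` with `S = 1 + a + ⋯ + a^(ord(a) - 1)`,
so the second condition says `addord(b S) ∣ q`.
-/

/-- The affine permutation `λ(a,b) : x ↦ a·x + b` of `ZMod m`, for a unit `a` and an
element `b`. -/
def affinePerm (m : ℕ) (a : (ZMod m)ˣ) (b : ZMod m) : Equiv.Perm (ZMod m) where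
  toFun x := (a : ZMod m) * x + b
  invFun x := ((a⁻¹ : (ZMod m)ˣ) : ZMod m) * (x - b)
  left_inv x := by
    show (a⁻¹ : (ZMod m)ˣ) * ((a : ZMod m) * x + b - b) = x
    rw [add_sub_cancel_right, ← mul_assoc, Units.inv_mul, one_mul]
  right_inv x := by
    show (a : ZMod m) * ((a⁻¹ : (ZMod m)ˣ) * (x - b)) + b = x
    rw [← mul_assoc, Units.mul_inv, one_mul, sub_add_cancel]

theorem geom_sum_range_mul_of_pow_eq_one {R : Type*} [Semiring R] {x : R} {n : ℕ}
    (h : x ^ n = 1) (q : ℕ) :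
    ∑ j ∈ Finset.range (n * q), x ^ j = q • ∑ j ∈ Finset.range n, x ^ j := by
  induction q with
  | zero => simp
  | succ q ih =>
    have periodic (j : ℕ) : x ^ (n * q + j) = x ^ j := by
      rw [pow_add, pow_mul, h, one_pow, one_mul]
    simp only [Nat.mul_succ, Finset.sum_range_add, ih, periodic, succ_nsmul]

namespace affinePerm

variable {m : ℕ} (a : (ZMod m)ˣ) (b : ZMod m)

theorem pow_apply (t : ℕ) (x : ZMod m) :
    (affinePerm m a b ^ t) x = (a : ZMod m) ^ t * x + b * ∑ j ∈ Finset.range t, (a : ZMod m) ^ j := by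
  induction t generalizing x with
  | zero => simp
  | succ t ih =>
    rw [pow_succ, Equiv.Perm.mul_apply, ih, Finset.sum_range_succ]
    show (a : ZMod m) ^ t * ((a : ZMod m) * x + b) + _ = _
    ring

theorem pow_eq_one_iff (t : ℕ) :
    affinePerm m a b ^ t = 1 ↔
      a ^ t = 1 ∧ b * ∑ j ∈ Finset.range t, (a : ZMod m) ^ j = 0 := by
  rw [← Units.val_eq_one, Units.val_pow_eq_pow_val]
  constructor
  · intro h
    -- evaluate at `0` to get the translation part, then at `1` to get the linear part
    have h0 := congrArg (· 0) h
    have h1 := congrArg (· 1) h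
    simp only [pow_apply, mul_zero, zero_add, mul_one, Equiv.Perm.one_apply] at h0 h1
    rw [h0, add_zero] at h1
    exact ⟨h1, h0⟩
  · rintro ⟨hlin, htrans⟩
    ext x
    rw [pow_apply, hlin, one_mul, htrans, add_zero, Equiv.Perm.one_apply]

theorem translation_pow_orderOf_mul (q : ℕ) :
    b * ∑ j ∈ Finset.range (orderOf a * q), (a : ZMod m) ^ j =
      q • (b * ∑ j ∈ Finset.range (orderOf a), (a : ZMod m) ^ j) := by
  have ha : (a : ZMod m) ^ orderOf a = 1 := by
    rw [← Units.val_pow_eq_pow_val, pow_orderOf_eq_one, Units.val_one]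
  rw [geom_sum_range_mul_of_pow_eq_one ha, mul_smul_comm]

theorem orderOf_eq :
    orderOf (affinePerm m a b) =
      orderOf a * addOrderOf (b * ∑ j ∈ Finset.range (orderOf a), (a : ZMod m) ^ j) := by
  apply Nat.dvd_antisymm
  · apply orderOf_dvd_of_pow_eq_one
    rw [pow_eq_one_iff, pow_mul, pow_orderOf_eq_one, one_pow, translation_pow_orderOf_mul]
    exact ⟨rfl, addOrderOf_nsmul_eq_zero _⟩
  · obtain ⟨hlin, htrans⟩ := (pow_eq_one_iff a b _).mp (pow_orderOf_eq_one (affinePerm m a b))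
    obtain ⟨q, hq⟩ := orderOf_dvd_of_pow_eq_one hlin
    rw [hq, translation_pow_orderOf_mul] at htrans
    rw [hq]
    exact mul_dvd_mul_left _ (addOrderOf_dvd_iff_nsmul_eq_zero.mpr htrans)

end affinePerm

theorem stmt7_general (p : ℕ) (k : ℕ)
    (a : (ZMod (p ^ k))ˣ) (b : ZMod (p ^ k)) :
    orderOf (affinePerm (p ^ k) a b)
      = orderOf a *
        addOrderOf (b * ∑ j ∈ Finset.range (orderOf a), (a : ZMod (p ^ k)) ^ j) :=
  affinePerm.orderOf_eq a b

/-- The order of the affine permutation `λ(a,b)` of `ℤ/p^kℤ` equals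
`ord(a) · addord(b·(1 + a + a² + ⋯ + a^{ord(a)−1}))`. -/
theorem stmt7 (p : ℕ) (hp : p.Prime) (k : ℕ) (hk : 0 < k)
    (a : (ZMod (p ^ k))ˣ) (b : ZMod (p ^ k)) :
    orderOf (affinePerm (p ^ k) a b)
      = orderOf a *
        addOrderOf (b * ∑ j ∈ Finset.range (orderOf a), (a : ZMod (p ^ k)) ^ j) :=
  stmt7_general p k a b
end

section
/- Let p be an odd prime, k a positive integer, a ∈ (ℤ/p^kℤ)ˣ with a ≢ 1 (mod p), and b ∈ ℤ/p^kℤ; let σ := λ(a,b). Write ν := ν_p(ord(a)) for the p-adic valuation of the multiplicative order of a, and t := ord(a)/p^ν for the p'-part of ord(a) (note t > 1). Then for every positive integer ℓ, the number of x ∈ ℤ/p^kℤ with σ^ℓ(x) = x equals p^{k−ν+min(ν, ν_p(ℓ))} if t divides ℓ, and equals 1 if t does not divide ℓ. In particular, σ has exactly one fixed point. -/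
section affinePerm

variable {m : ℕ} {a : (ZMod m)ˣ} {b x₀ : ZMod m}

theorem affinePerm_pow_apply (hx₀ : affinePerm m a b x₀ = x₀) (ℓ : ℕ) (x : ZMod m) :
    (affinePerm m a b ^ ℓ) x = (a : ZMod m) ^ ℓ * (x - x₀) + x₀ := by
  change (a : ZMod m) * x₀ + b = x₀ at hx₀
  induction ℓ generalizing x with
  | zero => simp
  | succ ℓ ih =>
    rw [pow_succ, Equiv.Perm.mul_apply, ih]
    change (a : ZMod m) ^ ℓ * ((a : ZMod m) * x + b - x₀) + x₀ = _
    linear_combination (a : ZMod m) ^ ℓ * hx₀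

theorem card_fixed_affinePerm_pow (hx₀ : affinePerm m a b x₀ = x₀) (ℓ : ℕ) :
    Nat.card {x : ZMod m // (affinePerm m a b ^ ℓ) x = x} =
      Nat.card {y : ZMod m // ((a : ZMod m) ^ ℓ - 1) * y = 0} :=
  Nat.card_congr <| (Equiv.subRight x₀).subtypeEquiv fun x => by
    rw [affinePerm_pow_apply hx₀, Equiv.subRight_apply, ← sub_eq_zero]
    ring_nf

theorem exists_affinePerm_apply_eq_self (h : IsUnit ((a : ZMod m) - 1)) :
    ∃ x₀, affinePerm m a b x₀ = x₀ :=
  ⟨-↑h.unit⁻¹ * b, by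
    change (a : ZMod m) * _ + b = _
    linear_combination (-b) * h.mul_val_inv⟩

end affinePerm

theorem ZMod.card_natCast_mul_eq_zero (n : ℕ) [NeZero n] (c : ℕ) :
    Nat.card {y : ZMod n // (c : ZMod n) * y = 0} = n.gcd c := by
  have hker := IsAddCyclic.card_nsmulAddMonoidHom_ker (ZMod n) c
  rw [Nat.card_zmod] at hker
  rw [← hker]
  exact Nat.card_congr <| Equiv.subtypeEquivRight fun y => by
    rw [AddMonoidHom.mem_ker, nsmulAddMonoidHom_apply, nsmul_eq_mul]

theorem Nat.gcd_prime_pow_eq_pow_min_padicValNat {p : ℕ} [Fact p.Prime] (k : ℕ) {M : ℕ}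
    (hM : M ≠ 0) : (p ^ k).gcd M = p ^ min k (padicValNat p M) := by
  obtain ⟨j, hjk, hj⟩ := (Nat.dvd_prime_pow Fact.out).mp (Nat.gcd_dvd_left (p ^ k) M)
  rw [hj]
  congr 1
  apply le_antisymm
  · refine le_min hjk ((padicValNat_dvd_iff_le hM).mp ?_)
    exact hj ▸ Nat.gcd_dvd_right _ _
  · rw [← Nat.pow_dvd_pow_iff_le_right (Fact.out : p.Prime).one_lt, ← hj]
    exact Nat.dvd_gcd (pow_dvd_pow p (min_le_left _ _))
      ((padicValNat_dvd_iff_le hM).mpr (min_le_right _ _))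

theorem card_fixed_affinePerm_pow_eq_gcd {n A : ℕ} [NeZero n] {a : (ZMod n)ˣ}
    (hA : (A : ZMod n) = a) (hA0 : A ≠ 0) {b x₀ : ZMod n} (hx₀ : affinePerm n a b x₀ = x₀)
    (ℓ : ℕ) : Nat.card {x : ZMod n // (affinePerm n a b ^ ℓ) x = x} = n.gcd (A ^ ℓ - 1) := by
  rw [card_fixed_affinePerm_pow hx₀, ← ZMod.card_natCast_mul_eq_zero,
    Nat.cast_sub (Nat.one_le_pow _ _ (Nat.pos_of_ne_zero hA0)), Nat.cast_pow, hA, Nat.cast_one]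

theorem dvd_pow_sub_one_iff_orderOf_dvd (n : ℕ) {A : ℕ} (hA : A ≠ 0) (m : ℕ) :
    n ∣ A ^ m - 1 ↔ orderOf (A : ZMod n) ∣ m := by
  rw [orderOf_dvd_iff_pow_eq_one, ← ZMod.natCast_eq_zero_iff,
    Nat.cast_sub (Nat.one_le_pow _ _ (Nat.pos_of_ne_zero hA)), Nat.cast_pow, Nat.cast_one,
    sub_eq_zero]

section OddPrime

variable {p : ℕ} [hp : Fact p.Prime] {A : ℕ}

theorem not_dvd_orderOf_natCast (hA : ¬p ∣ A) : ¬p ∣ orderOf (A : ZMod p) := fun h => by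
  have hdvd := ZMod.orderOf_dvd_card_sub_one (by rwa [Ne, ZMod.natCast_eq_zero_iff])
  have := Nat.le_of_dvd (Nat.sub_pos_of_lt hp.out.one_lt) (h.trans hdvd)
  have := hp.out.two_le
  omega

theorem padicValNat_pow_sub_one (hodd : Odd p) (hA : ¬p ∣ A) (hA1 : 1 < A) {n : ℕ}
    (hn : n ≠ 0) :
    padicValNat p (A ^ n - 1) = if orderOf (A : ZMod p) ∣ n then
      padicValNat p (A ^ orderOf (A : ZMod p) - 1) + padicValNat p n else 0 := by
  set t := orderOf (A : ZMod p)
  have hA0 : A ≠ 0 := by omega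
  split_ifs with ht
  · obtain ⟨s, rfl⟩ := ht
    have hs : s ≠ 0 := right_ne_zero_of_mul hn
    have ht0 : t ≠ 0 := left_ne_zero_of_mul hn
    have hlte := padicValNat.pow_sub_pow hodd (Nat.one_lt_pow ht0 hA1)
      ((dvd_pow_sub_one_iff_orderOf_dvd p hA0 t).mpr dvd_rfl)
      (fun h => hA (hp.out.dvd_of_dvd_pow h)) hs
    rw [one_pow, ← pow_mul] at hlte
    rw [hlte, padicValNat.mul ht0 hs,
      padicValNat.eq_zero_of_not_dvd (not_dvd_orderOf_natCast hA), zero_add]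
  · exact padicValNat.eq_zero_of_not_dvd ((dvd_pow_sub_one_iff_orderOf_dvd p hA0 n).not.mpr ht)

theorem orderOf_natCast_prime_pow (hodd : Odd p) (hA : ¬p ∣ A) (hA1 : 1 < A) {k : ℕ}
    (hk : k ≠ 0) :
    orderOf (A : ZMod (p ^ k)) =
      orderOf (A : ZMod p) * p ^ (k - padicValNat p (A ^ orderOf (A : ZMod p) - 1)) := by
  refine Nat.dvd_right_iff_eq.mp fun n => ?_
  rcases eq_or_ne n 0 with rfl | hn
  · simp
  rw [← dvd_pow_sub_one_iff_orderOf_dvd _ (by omega),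
    padicValNat_dvd_iff_le (Nat.sub_ne_zero_of_lt (Nat.one_lt_pow hn hA1)),
    padicValNat_pow_sub_one hodd hA hA1 hn]
  set t := orderOf (A : ZMod p)
  set m := padicValNat p (A ^ t - 1)
  have hcop : t.Coprime (p ^ (k - m)) :=
    Nat.Coprime.pow_right _ (Nat.coprime_comm.mp
      (hp.out.coprime_iff_not_dvd.mpr (not_dvd_orderOf_natCast hA)))
  have hmul_dvd_iff : t * p ^ (k - m) ∣ n ↔ t ∣ n ∧ p ^ (k - m) ∣ n :=
    ⟨fun h => ⟨dvd_of_mul_right_dvd h, dvd_of_mul_left_dvd h⟩,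
      fun h => hcop.mul_dvd_of_dvd_of_dvd h.1 h.2⟩
  rw [hmul_dvd_iff, padicValNat_dvd_iff_le hn]
  split_ifs with ht
  · exact ⟨fun h => ⟨ht, by omega⟩, fun h => by omega⟩
  · exact ⟨fun h => by omega, fun h => absurd h.1 ht⟩

end OddPrime

theorem Nat.factorization_mul_pow_of_not_dvd {p t : ℕ} (hp : p.Prime) (ht : ¬p ∣ t) (j : ℕ) :
    (t * p ^ j).factorization p = j := by
  rw [Nat.factorization_mul (fun (h : t = 0) => ht (h ▸ dvd_zero p)) (pow_ne_zero _ hp.ne_zero),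
    Finsupp.add_apply, Nat.factorization_eq_zero_of_not_dvd ht, hp.factorization_pow,
    Finsupp.single_eq_same, zero_add]

theorem ZMod.exists_natCast_eq_of_castHom_ne_one {p k : ℕ} (hp : p.Prime) (hk : 0 < k)
    (a : (ZMod (p ^ k))ˣ)
    (ha : ZMod.castHom (dvd_pow_self p hk.ne') (ZMod p) (a : ZMod (p ^ k)) ≠ 1) :
    ∃ A : ℕ, (A : ZMod (p ^ k)) = a ∧ 1 < A ∧ ¬p ∣ A ∧ (A : ZMod p) ≠ 1 := by
  have := Fact.mk hp
  refine ⟨(a : ZMod (p ^ k)).val, ZMod.natCast_zmod_val _, ?_⟩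
  have hpA : ¬p ∣ (a : ZMod (p ^ k)).val := by
    rw [← ZMod.isUnit_natCast_iff_not_dvd_pow hp hk, ZMod.natCast_zmod_val]
    exact a.isUnit
  have hA_mod_p : ((a : ZMod (p ^ k)).val : ZMod p) ≠ 1 := by
    rwa [← map_natCast (ZMod.castHom (dvd_pow_self p hk.ne') (ZMod p)), ZMod.natCast_zmod_val]
  refine ⟨?_, hpA, hA_mod_p⟩
  have : (a : ZMod (p ^ k)).val ≠ 0 := fun h => hpA (h ▸ dvd_zero p)
  have : (a : ZMod (p ^ k)).val ≠ 1 := fun h => hA_mod_p (by rw [h, Nat.cast_one])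
  omega

/-- For `p` an odd prime, `a` a unit of `ℤ/p^kℤ` with `a ≢ 1 (mod p)` and `σ = λ(a,b)`:
writing `ν = ν_p(ord(a))` and `t = ord(a)/p^ν` for the `p'`-part of `ord(a)`, the number
of fixed points of `σ^ℓ` is `p^{k−ν+min(ν,ν_p(ℓ))}` if `t ∣ ℓ` and `1` otherwise; in
particular, `σ` has exactly one fixed point. -/
theorem stmt8 (p : ℕ) (hp : p.Prime) (hodd : Odd p) (k : ℕ) (hk : 0 < k)
    (a : (ZMod (p ^ k))ˣ)
    (ha : ZMod.castHom (dvd_pow_self p hk.ne') (ZMod p) (a : ZMod (p ^ k)) ≠ 1)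
    (b : ZMod (p ^ k)) :
    (∀ ℓ : ℕ, 0 < ℓ →
      Nat.card {x : ZMod (p ^ k) // ((affinePerm (p ^ k) a b) ^ ℓ) x = x}
        = if (orderOf a) / p ^ ((orderOf a).factorization p) ∣ ℓ then
            p ^ (k - (orderOf a).factorization p
                + min ((orderOf a).factorization p) (ℓ.factorization p))
          else 1) ∧
    Nat.card {x : ZMod (p ^ k) // (affinePerm (p ^ k) a b) x = x} = 1 := by
  have := Fact.mk hp
  obtain ⟨A, hA, hA1, hpA, hA_mod_p⟩ := ZMod.exists_natCast_eq_of_castHom_ne_one hp hk a ha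
  have hA_order : orderOf (A : ZMod p) ≠ 1 := by rwa [Ne, orderOf_eq_one_iff]
  obtain ⟨x₀, hx₀⟩ : ∃ x₀, affinePerm (p ^ k) a b x₀ = x₀ := by
    refine exists_affinePerm_apply_eq_self ?_
    rwa [← hA, ← Nat.cast_one, ← Nat.cast_sub hA1.le, ZMod.isUnit_natCast_iff_not_dvd_pow hp hk,
      ← pow_one A, dvd_pow_sub_one_iff_orderOf_dvd p (by omega), Nat.dvd_one]
  set t := orderOf (A : ZMod p) with ht_def
  set m := padicValNat p (A ^ t - 1) with hm_def
  have hord : orderOf a = t * p ^ (k - m) := by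
    rw [← orderOf_units, ← hA, orderOf_natCast_prime_pow hodd hpA hA1 hk.ne']
  rw [hord, Nat.factorization_mul_pow_of_not_dvd hp (not_dvd_orderOf_natCast hpA),
    Nat.mul_div_cancel _ (pow_pos hp.pos _)]
  have hcount (ℓ : ℕ) (hℓ : 0 < ℓ) :
      Nat.card {x : ZMod (p ^ k) // ((affinePerm (p ^ k) a b) ^ ℓ) x = x}
        = if t ∣ ℓ then p ^ (k - (k - m) + min (k - m) (ℓ.factorization p)) else 1 := by
    rw [card_fixed_affinePerm_pow_eq_gcd hA (by omega) hx₀,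
      Nat.gcd_prime_pow_eq_pow_min_padicValNat k
        (Nat.sub_ne_zero_of_lt (Nat.one_lt_pow hℓ.ne' hA1)),
      padicValNat_pow_sub_one hodd hpA hA1 hℓ.ne', Nat.factorization_def _ hp, ← ht_def, ← hm_def]
    split_ifs
    · congr 1
      omega
    · simp
  refine ⟨hcount, ?_⟩
  simpa [Nat.dvd_one, hA_order] using hcount 1 one_pos
end

section
/- Let p be an odd prime, k a positive integer, a ∈ (ℤ/p^kℤ)ˣ with a ≡ 1 (mod p), and b ∈ ℤ/p^kℤ with v(b) ≥ v(a−1); let σ := λ(a,b). Then the order of σ as a permutation is a power of p, and for every integer s ≥ 0, the number of x ∈ ℤ/p^kℤ with σ^{p^s}(x) = x equals p^{min(k, v(a−1)+s)}. -/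
/-- `padicV p k c` is `v(c) = max{ j ∈ {0,…,k} : c ∈ p^j·(ℤ/p^kℤ) }`: it is `k` for
`c = 0`, and the `p`-adic valuation of the canonical representative `c.val` otherwise. -/
def padicV (p k : ℕ) (c : ZMod (p ^ k)) : ℕ :=
  if c = 0 then k else (c.val).factorization p

/-! The hypothesis `v(b) ≥ v(a - 1)` says exactly that `b = (a - 1) β` for some `β`, and then
`λ(a,b)` is conjugate by a translation to `x ↦ a x`. So the fixed points of `λ(a,b)^n` are a
translate of the kernel of multiplication by `a^n - 1` on `ℤ/p^kℤ`, which has `p^{v(a^n - 1)}`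
elements. Lifting the exponent gives `v(a^{p^s} - 1) = min(k, v(a - 1) + s)` for odd `p`; for
`s = k` this is `k`, so `λ(a,b)^{p^k} = 1`. -/

theorem ZMod.card_mul_eq_zero {n : ℕ} [NeZero n] (c : ZMod n) :
    Nat.card {x : ZMod n // c * x = 0} = n.gcd c.val := by
  have hker := IsAddCyclic.card_nsmulAddMonoidHom_ker (ZMod n) c.val
  rw [Nat.card_zmod] at hker
  rw [← hker]
  refine Nat.card_congr (Equiv.subtypeEquivRight fun x => ?_)
  rw [AddMonoidHom.mem_ker, nsmulAddMonoidHom_apply, nsmul_eq_mul, ZMod.natCast_zmod_val]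

section padicV

variable {p k : ℕ}

theorem le_padicV_iff (hp : p.Prime) {c : ZMod (p ^ k)} {j : ℕ} :
    j ≤ padicV p k c ↔ j ≤ k ∧ p ^ j ∣ c.val := by
  have : NeZero (p ^ k) := ⟨pow_ne_zero k hp.ne_zero⟩
  by_cases hc : c = 0
  · simp [padicV, hc]
  have hval : c.val ≠ 0 := (ZMod.val_ne_zero c).mpr hc
  rw [padicV, if_neg hc, ← hp.pow_dvd_iff_le_factorization hval]
  refine ⟨fun h => ⟨?_, h⟩, And.right⟩
  have hlt : p ^ j < p ^ k := (Nat.le_of_dvd (Nat.pos_of_ne_zero hval) h).trans_lt (ZMod.val_lt c)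
  exact ((Nat.pow_lt_pow_iff_right hp.one_lt).mp hlt).le

theorem pow_padicV_eq_gcd (hp : p.Prime) (c : ZMod (p ^ k)) :
    p ^ padicV p k c = (p ^ k).gcd c.val := by
  obtain ⟨i, hik, hi⟩ := (Nat.dvd_prime_pow hp).mp (Nat.gcd_dvd_left (p ^ k) c.val)
  obtain ⟨hvk, hvc⟩ := (le_padicV_iff hp).mp (le_refl (padicV p k c))
  rw [hi]
  refine congrArg (p ^ ·) (le_antisymm ?_ ?_)
  · exact (Nat.pow_dvd_pow_iff_le_right hp.one_lt).mp
      (hi ▸ Nat.dvd_gcd (pow_dvd_pow p hvk) hvc)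
  · exact (le_padicV_iff hp).mpr ⟨hik, hi ▸ Nat.gcd_dvd_right _ _⟩

theorem eq_zero_of_padicV_eq (hp : p.Prime) {c : ZMod (p ^ k)} (h : padicV p k c = k) :
    c = 0 := by
  have : NeZero (p ^ k) := ⟨pow_ne_zero k hp.ne_zero⟩
  rw [← ZMod.val_eq_zero]
  exact Nat.eq_zero_of_dvd_of_lt ((le_padicV_iff hp).mp h.ge).2 (ZMod.val_lt c)

theorem dvd_of_padicV_le (hp : p.Prime) {c d : ZMod (p ^ k)}
    (h : padicV p k c ≤ padicV p k d) : c ∣ d :=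
  have : NeZero (p ^ k) := ⟨pow_ne_zero k hp.ne_zero⟩
  -- `c⁻¹` in `ZMod` is a Bézout inverse: `c * c⁻¹ = gcd(c.val, p ^ k)`.
  calc c ∣ ((c.val.gcd (p ^ k) : ℕ) : ZMod (p ^ k)) := ⟨c⁻¹, (ZMod.mul_inv_eq_gcd c).symm⟩
    _ = ((p ^ padicV p k c : ℕ) : ZMod (p ^ k)) := by rw [Nat.gcd_comm, pow_padicV_eq_gcd hp]
    _ ∣ ((p ^ padicV p k d : ℕ) : ZMod (p ^ k)) := Nat.cast_dvd_cast (pow_dvd_pow p h)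
    _ ∣ ((d.val : ℕ) : ZMod (p ^ k)) := Nat.cast_dvd_cast ((le_padicV_iff hp).mp le_rfl).2
    _ = d := ZMod.natCast_zmod_val d

theorem padicV_intCast (hp : p.Prime) (N : ℤ) :
    (padicV p k (N : ZMod (p ^ k)) : ℕ∞) = min (k : ℕ∞) (emultiplicity (p : ℤ) N) := by
  have : NeZero (p ^ k) := ⟨pow_ne_zero k hp.ne_zero⟩
  refine ENat.eq_of_forall_natCast_le_iff fun j => ?_
  rw [Nat.cast_le, le_padicV_iff hp, le_min_iff, Nat.cast_le, ← pow_dvd_iff_le_emultiplicity,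
    and_congr_right_iff]
  intro hj
  rw [← Int.natCast_dvd_natCast, ZMod.val_intCast, Nat.cast_pow, EuclideanDomain.dvd_mod_iff]
  exact_mod_cast pow_dvd_pow p hj

theorem padicV_pow_prime_pow_sub_one (hp : p.Prime) (hodd : Odd p) (hk : k ≠ 0)
    {a : ZMod (p ^ k)} (ha : ZMod.castHom (dvd_pow_self p hk) (ZMod p) a = 1) (s : ℕ) :
    padicV p k (a ^ p ^ s - 1) = min k (padicV p k (a - 1) + s) := by
  obtain ⟨A, rfl⟩ := ZMod.intCast_surjective a
  have hA : (p : ℤ) ∣ A - 1 := by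
    rw [← ZMod.intCast_zmod_eq_zero_iff_dvd, Int.cast_sub, Int.cast_one, sub_eq_zero]
    simpa using ha
  have hpA : ¬ (p : ℤ) ∣ A := fun h =>
    hp.one_lt.ne' (Nat.dvd_one.mp (Int.natCast_dvd_natCast.mp (by simpa using dvd_sub h hA)))
  have hLTE := Int.emultiplicity_pow_sub_pow hp hodd (y := 1) (by simpa using hA) hpA (p ^ s)
  rw [one_pow, emultiplicity_pow_self_of_prime (Nat.prime_iff.mp hp) s] at hLTE
  apply Nat.cast_injective (R := ℕ∞)
  rw [← Int.cast_pow, ← Int.cast_one, ← Int.cast_sub, ← Int.cast_sub, padicV_intCast hp, hLTE]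
  have hv := padicV_intCast (k := k) hp (A - 1)
  generalize emultiplicity (p : ℤ) (A - 1) = e at hv ⊢
  induction e using ENat.recTopCoe with
  | top =>
    simp only [min_top_right, Nat.cast_inj] at hv
    rw [hv]
    simp
  | coe e =>
    rw [← Nat.cast_add, ← Nat.mono_cast.map_min] at *
    rw [Nat.cast_inj] at hv ⊢
    omega

end padicV

section affinePerm

variable {m : ℕ} {a : (ZMod m)ˣ} {b β : ZMod m}

theorem affinePerm_pow_apply_of_eq_mul (hβ : b = ((a : ZMod m) - 1) * β) (n : ℕ)
    (x : ZMod m) : (affinePerm m a b ^ n) x = (a : ZMod m) ^ n * (x + β) - β := by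
  induction n with
  | zero => simp
  | succ n ih =>
    rw [pow_succ', Equiv.Perm.mul_apply, ih]
    change (a : ZMod m) * _ + b = _
    rw [hβ]
    ring

theorem affinePerm_pow_apply_eq_self_iff (hβ : b = ((a : ZMod m) - 1) * β) (n : ℕ)
    (x : ZMod m) : (affinePerm m a b ^ n) x = x ↔ ((a : ZMod m) ^ n - 1) * (x + β) = 0 := by
  rw [affinePerm_pow_apply_of_eq_mul hβ, ← sub_eq_zero]
  ring_nf

theorem card_fixedPoints_affinePerm_pow [NeZero m] (hβ : b = ((a : ZMod m) - 1) * β) (n : ℕ) :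
    Nat.card {x : ZMod m // (affinePerm m a b ^ n) x = x} = m.gcd ((a : ZMod m) ^ n - 1).val := by
  rw [← ZMod.card_mul_eq_zero]
  exact Nat.card_congr
    ((Equiv.addRight β).subtypeEquiv fun x => affinePerm_pow_apply_eq_self_iff hβ n x)

end affinePerm

/-- For `p` an odd prime, `a ≡ 1 (mod p)` a unit of `ℤ/p^kℤ` and `b` with
`v(b) ≥ v(a−1)`, the order of `σ = λ(a,b)` is a power of `p`, and for each `s ≥ 0` the
number of fixed points of `σ^{p^s}` is `p^{min(k, v(a−1)+s)}`. -/
theorem stmt9 (p : ℕ) (hp : p.Prime) (hodd : Odd p) (k : ℕ) (hk : 0 < k)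
    (a : (ZMod (p ^ k))ˣ)
    (ha : ZMod.castHom (dvd_pow_self p hk.ne') (ZMod p) (a : ZMod (p ^ k)) = 1)
    (b : ZMod (p ^ k))
    (hb : padicV p k ((a : ZMod (p ^ k)) - 1) ≤ padicV p k b) :
    (∃ n : ℕ, orderOf (affinePerm (p ^ k) a b) = p ^ n) ∧
    ∀ s : ℕ,
      Nat.card {x : ZMod (p ^ k) // ((affinePerm (p ^ k) a b) ^ (p ^ s)) x = x}
        = p ^ (min k (padicV p k ((a : ZMod (p ^ k)) - 1) + s)) := by
  have : NeZero (p ^ k) := ⟨pow_ne_zero k hp.ne_zero⟩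
  obtain ⟨β, hβ⟩ := dvd_of_padicV_le hp hb
  have hval := padicV_pow_prime_pow_sub_one hp hodd hk.ne' ha
  refine ⟨?_, fun s => ?_⟩
  · have ha_pow : (a : ZMod (p ^ k)) ^ p ^ k - 1 = 0 :=
      eq_zero_of_padicV_eq hp (by rw [hval]; omega)
    have hσ : affinePerm (p ^ k) a b ^ p ^ k = 1 := Equiv.ext fun x =>
      (affinePerm_pow_apply_eq_self_iff hβ _ x).mpr (by rw [ha_pow, zero_mul])
    obtain ⟨n, -, hn⟩ := (Nat.dvd_prime_pow hp).mp (orderOf_dvd_of_pow_eq_one hσ)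
    exact ⟨n, hn⟩
  · rw [card_fixedPoints_affinePerm_pow hβ, ← pow_padicV_eq_gcd hp, hval]
end

section
/- Let p be an odd prime, k a positive integer, a ∈ (ℤ/p^kℤ)ˣ with a ≡ 1 (mod p), and b ∈ ℤ/p^kℤ with v(b) < v(a−1); let σ := λ(a,b). Then for every x ∈ ℤ/p^kℤ, the least positive integer n with σ^n(x) = x equals addord(b) = p^{k−v(b)}; that is, σ is a product of p^k/addord(b) disjoint cycles, each of length addord(b). -/
/-!
Lift `a`, `b`, `x` to integers `α`, `β`, `ξ`. Then
`σⁿ(x) - x = (1 + α + ⋯ + αⁿ⁻¹) · ((α - 1)ξ + β)`. Since `p` is odd and `p ∣ α - 1`, the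
lifting-the-exponent lemma gives `ν_p(1 + α + ⋯ + αⁿ⁻¹) = ν_p(n)`, and `v(b) < v(a - 1)` forces
`ν_p((α - 1)ξ + β) = ν_p(β) = v(b)`. Hence `σⁿ(x) = x` iff `ν_p(n) + v(b) ≥ k`, i.e. iff
`p^(k - v(b)) ∣ n`; the same count applied to `n • b = nβ` gives `addord(b) = p^(k - v(b))`.
-/

open Finset Function

theorem iterate_affine_sub_self {R : Type*} [CommRing R] (a b x : R) (n : ℕ) :
    (fun y => a * y + b)^[n] x - x = (∑ i ∈ range n, a ^ i) * ((a - 1) * x + b) := by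
  induction n with
  | zero => simp
  | succ n ih =>
    rw [iterate_succ_apply', geom_sum_succ]
    linear_combination a * ih

theorem minimalPeriod_eq_of_isPeriodicPt_iff {α : Type*} {f : α → α} {x : α} {m : ℕ}
    (h : ∀ n, IsPeriodicPt f n x ↔ m ∣ n) : minimalPeriod f x = m :=
  Nat.dvd_right_iff_eq.1 fun n => isPeriodicPt_iff_minimalPeriod_dvd.symm.trans (h n)

theorem addOrderOf_eq_of_nsmul_eq_zero_iff {G : Type*} [AddMonoid G] {x : G} {m : ℕ}
    (h : ∀ n : ℕ, n • x = 0 ↔ m ∣ n) : addOrderOf x = m :=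
  Nat.dvd_right_iff_eq.1 fun n => addOrderOf_dvd_iff_nsmul_eq_zero.trans (h n)

theorem emultiplicity_mul_add_of_lt {R : Type*} [Ring R] {p a x b : R}
    (h : emultiplicity p b < emultiplicity p a) :
    emultiplicity p (a * x + b) = emultiplicity p b :=
  emultiplicity_add_of_gt
    (h.trans_le (emultiplicity_le_emultiplicity_of_dvd_right (dvd_mul_right _ _)))

section Multiplicity

variable {p : ℕ} (hp : p.Prime)
include hp

theorem Int.emultiplicity_geom_sum_of_dvd_sub_one (hodd : Odd p) {α : ℤ} (hα : (p : ℤ) ∣ α - 1)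
    (n : ℕ) : emultiplicity (p : ℤ) (∑ i ∈ Finset.range n, α ^ i) = emultiplicity p n := by
  rcases eq_or_ne α 1 with rfl | hα1
  · simp [Int.natCast_emultiplicity]
  have hprime : Prime (p : ℤ) := Nat.prime_iff_prime_int.mp hp
  have hfinite : emultiplicity (p : ℤ) (α - 1) ≠ ⊤ :=
    finiteMultiplicity_iff_emultiplicity_ne_top.1 <|
      Int.finiteMultiplicity_iff.2 ⟨by simpa using hp.ne_one, sub_ne_zero.2 hα1⟩
  have hα_coprime : ¬(p : ℤ) ∣ α := fun h => hprime.not_dvd_one (by simpa using dvd_sub h hα)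
  have lte := Int.emultiplicity_pow_sub_pow hp hodd (y := 1) (by simpa using hα) hα_coprime n
  rw [one_pow, ← mul_geom_sum, emultiplicity_mul hprime] at lte
  exact (WithTop.add_left_inj hfinite).1 lte

theorem Int.pow_dvd_mul_iff_of_emultiplicity_eq {T D : ℤ} {v k : ℕ}
    (hD : emultiplicity (p : ℤ) D = v) :
    (p : ℤ) ^ k ∣ T * D ↔ (p : ℤ) ^ (k - v) ∣ T := by
  rw [pow_dvd_iff_le_emultiplicity, pow_dvd_iff_le_emultiplicity,
    emultiplicity_mul (Nat.prime_iff_prime_int.mp hp), hD, ENat.natCast_sub, tsub_le_iff_right]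

end Multiplicity

section PadicV

variable {p k : ℕ} (hp : p.Prime)
include hp

theorem padicV_le (c : ZMod (p ^ k)) : padicV p k c ≤ k := by
  have : NeZero p := ⟨hp.ne_zero⟩
  unfold padicV
  split_ifs with hc
  · exact le_rfl
  · have hval : c.val ≠ 0 := (ZMod.val_ne_zero c).2 hc
    exact ((Nat.pow_lt_pow_iff_right hp.one_lt).1
      ((Nat.ordProj_le p hval).trans_lt c.val_lt)).le

theorem Int.pow_dvd_iff_le_padicV {j : ℕ} (hj : j ≤ k) (γ : ℤ) :
    (p : ℤ) ^ j ∣ γ ↔ j ≤ padicV p k γ := by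
  have : NeZero p := ⟨hp.ne_zero⟩
  set c : ZMod (p ^ k) := (γ : ZMod (p ^ k))
  have hcongr : (p : ℤ) ^ j ∣ (c.val : ℤ) - γ := by
    refine (pow_dvd_pow _ hj).trans ?_
    exact_mod_cast (ZMod.intCast_eq_intCast_iff_dvd_sub _ _ _).1
      (by rw [Int.cast_natCast, ZMod.natCast_zmod_val])
  rw [← dvd_iff_dvd_of_dvd_sub hcongr, ← Nat.cast_pow, Int.natCast_dvd_natCast]
  unfold padicV
  split_ifs with hc
  · simp [hc, hj]
  · exact hp.pow_dvd_iff_le_factorization ((ZMod.val_ne_zero c).2 hc)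

theorem Int.emultiplicity_eq_padicV {γ : ℤ} (h : padicV p k γ < k) :
    emultiplicity (p : ℤ) γ = padicV p k γ :=
  emultiplicity_eq_coe.2 ⟨(pow_dvd_iff_le_padicV hp h.le γ).2 le_rfl,
    fun hd => ((pow_dvd_iff_le_padicV hp h γ).1 hd).not_gt (Nat.lt_succ_self _)⟩

end PadicV

theorem stmt10_general (p : ℕ) (hp : p.Prime) (hodd : Odd p) (k : ℕ)
    (a : (ZMod (p ^ k))ˣ)
    (b : ZMod (p ^ k))
    (hb : padicV p k b < padicV p k ((a : ZMod (p ^ k)) - 1)) :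
    (∀ x : ZMod (p ^ k),
      Function.minimalPeriod (fun y => (affinePerm (p ^ k) a b) y) x = addOrderOf b) ∧
    addOrderOf b = p ^ (k - padicV p k b) := by
  obtain ⟨α, hα⟩ := ZMod.intCast_surjective (a : ZMod (p ^ k))
  obtain ⟨β, rfl⟩ := ZMod.intCast_surjective b
  set v := padicV p k β
  rw [← hα, ← Int.cast_one, ← Int.cast_sub] at hb
  have hvk : v < k := hb.trans_le (padicV_le hp _)
  have hβ : emultiplicity (p : ℤ) β = v := Int.emultiplicity_eq_padicV hp hvk
  have hα1 : (p : ℤ) ^ (v + 1) ∣ α - 1 := (Int.pow_dvd_iff_le_padicV hp hvk _).2 hb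
  have hβα : emultiplicity (p : ℤ) β < emultiplicity (p : ℤ) (α - 1) :=
    hβ ▸ (ENat.natCast_lt_natCast.2 v.lt_succ_self).trans_le (le_emultiplicity_of_pow_dvd hα1)
  have hord : addOrderOf (β : ZMod (p ^ k)) = p ^ (k - v) := by
    refine addOrderOf_eq_of_nsmul_eq_zero_iff fun n => ?_
    rw [nsmul_eq_mul, ← Int.cast_natCast, ← Int.cast_mul, ZMod.intCast_zmod_eq_zero_iff_dvd,
      Nat.cast_pow, Int.pow_dvd_mul_iff_of_emultiplicity_eq hp hβ, ← Nat.cast_pow,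
      Int.natCast_dvd_natCast]
  refine ⟨fun x => ?_, hord⟩
  obtain ⟨ξ, rfl⟩ := ZMod.intCast_surjective x
  have hD : emultiplicity (p : ℤ) ((α - 1) * ξ + β) = v :=
    (emultiplicity_mul_add_of_lt hβα).trans hβ
  rw [hord]
  refine minimalPeriod_eq_of_isPeriodicPt_iff fun n => ?_
  change (fun y => (a : ZMod (p ^ k)) * y + β)^[n] ξ = ξ ↔ _
  rw [← sub_eq_zero, iterate_affine_sub_self, ← hα]
  norm_cast
  rw [ZMod.intCast_zmod_eq_zero_iff_dvd, Nat.cast_pow,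
    Int.pow_dvd_mul_iff_of_emultiplicity_eq hp hD, pow_dvd_iff_le_emultiplicity,
    Int.emultiplicity_geom_sum_of_dvd_sub_one hp hodd ((dvd_pow_self _ v.succ_ne_zero).trans hα1),
    ← pow_dvd_iff_le_emultiplicity]

/-- For `p` an odd prime, `a ≡ 1 (mod p)` a unit of `ℤ/p^kℤ` and `b` with
`v(b) < v(a−1)`, every point of `ℤ/p^kℤ` lies on a cycle of `σ = λ(a,b)` of length
exactly `addord(b) = p^{k−v(b)}`. -/
theorem stmt10 (p : ℕ) (hp : p.Prime) (hodd : Odd p) (k : ℕ) (hk : 0 < k)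
    (a : (ZMod (p ^ k))ˣ)
    (ha : ZMod.castHom (dvd_pow_self p hk.ne') (ZMod p) (a : ZMod (p ^ k)) = 1)
    (b : ZMod (p ^ k))
    (hb : padicV p k b < padicV p k ((a : ZMod (p ^ k)) - 1)) :
    (∀ x : ZMod (p ^ k),
      Function.minimalPeriod (fun y => (affinePerm (p ^ k) a b) y) x = addOrderOf b) ∧
    addOrderOf b = p ^ (k - padicV p k b) :=
  stmt10_general p hp hodd k a b hb
end

section
/- Let k ≥ 3 be an integer, a ∈ (ℤ/2^kℤ)ˣ with a ≡ 3 (mod 4), and let b ∈ ℤ/2^kℤ be odd (a unit). Then for every x ∈ ℤ/2^kℤ, the least positive integer n with (λ(a,b))^n(x) = x equals 2^{k+1−v(a+1)} (note that 2 ≤ v(a+1) ≤ k since 4 divides a+1); that is, λ(a,b) is a product of 2^{v(a+1)−1} disjoint cycles, each of length 2^{k+1−v(a+1)}. -/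
/-!
`λ(a,b)^n(x) - x = (1 + a + ⋯ + a^(n-1)) · ((a - 1)x + b)`, and `(a - 1)x + b` is odd, hence a
unit; so `x` is `n`-periodic exactly when the geometric sum `S_n(a)` vanishes mod `2^k`.
For `a ≡ 3 (mod 4)`, lifting the exponent gives `ν₂(a^(2^j) - 1) = ν₂(a + 1) + j`, and
`ν₂(a - 1) = 1`, so `ν₂(S_(2^j)(a)) = ν₂(a + 1) + j - 1`.
Hence `2^(k+1-v(a+1))` is a period of `x` and `2^(k-v(a+1))` is not.
-/

open Finset Function

section Affine

variable {m : ℕ} (a : (ZMod m)ˣ) (b : ZMod m)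

@[simp]
theorem affinePerm_apply (x : ZMod m) : affinePerm m a b x = a * x + b := rfl

theorem affinePerm_iterate_sub_self (n : ℕ) (x : ZMod m) :
    (affinePerm m a b)^[n] x - x = (∑ i ∈ range n, (a : ZMod m) ^ i) * ((a - 1) * x + b) := by
  induction n with
  | zero => simp
  | succ n ih =>
    rw [iterate_succ_apply', affinePerm_apply, geom_sum_succ]
    linear_combination (a : ZMod m) * ih

variable {a b}

theorem isPeriodicPt_affinePerm_iff {n : ℕ} {x : ZMod m}
    (hx : IsUnit (((a : ZMod m) - 1) * x + b)) :
    IsPeriodicPt (affinePerm m a b) n x ↔ ∑ i ∈ range n, (a : ZMod m) ^ i = 0 := by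
  rw [IsPeriodicPt, IsFixedPt, ← sub_eq_zero, affinePerm_iterate_sub_self, hx.mul_left_eq_zero]

end Affine

theorem ZMod.isUnit_of_not_dvd_pow {p k : ℕ} (hp : p.Prime) (hk : 0 < k) {y : ZMod (p ^ k)}
    (hy : ¬ (p : ZMod (p ^ k)) ∣ y) : IsUnit y := by
  have : NeZero (p ^ k) := ⟨pow_ne_zero _ hp.ne_zero⟩
  rw [← ZMod.natCast_zmod_val y, ZMod.isUnit_natCast_iff_not_dvd_pow hp hk]
  rintro ⟨c, hc⟩
  exact hy ⟨c, by rw [← ZMod.natCast_zmod_val y, hc, Nat.cast_mul]⟩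

theorem isUnit_sub_one_mul_add {k : ℕ} (hk : 0 < k) {a b : ZMod (2 ^ k)} (ha : Odd a.val)
    (hb : ¬ (2 : ZMod (2 ^ k)) ∣ b) (x : ZMod (2 ^ k)) : IsUnit ((a - 1) * x + b) := by
  have : NeZero (2 ^ k) := ⟨by positivity⟩
  obtain ⟨c, hc⟩ := ha
  have ha' : a = 2 * c + 1 := by
    rw [← ZMod.natCast_zmod_val a, hc]
    push_cast
    ring
  refine ZMod.isUnit_of_not_dvd_pow Nat.prime_two hk ?_
  rwa [Nat.cast_ofNat, ha', add_sub_cancel_right, mul_assoc,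
    dvd_add_right (dvd_mul_right _ _)]

theorem padicV_add_one {p k : ℕ} [hp : Fact p.Prime] (c : ZMod (p ^ k)) :
    padicV p k (c + 1) = padicValNat p (c.val + 1) := by
  have : NeZero (p ^ k) := ⟨pow_ne_zero _ hp.out.ne_zero⟩
  have hcast : ((c.val + 1 : ℕ) : ZMod (p ^ k)) = c + 1 := by
    push_cast [ZMod.natCast_zmod_val]
    rfl
  have hle : c.val + 1 ≤ p ^ k := ZMod.val_lt c
  unfold padicV
  split_ifs with h
  · rw [← hcast, ZMod.natCast_eq_zero_iff] at h
    rw [le_antisymm hle (Nat.le_of_dvd c.val.succ_pos h), padicValNat.prime_pow]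
  · have hlt : c.val + 1 < p ^ k :=
      hle.lt_of_ne fun heq => h (by rw [← hcast, heq, ZMod.natCast_self])
    rw [Nat.factorization_def _ hp.out, ← hcast, ZMod.val_natCast, Nat.mod_eq_of_lt hlt]

theorem padicValNat_geom_sum_two_pow {x : ℕ} (hx : x % 4 = 3) {j : ℕ} (hj : j ≠ 0) :
    padicValNat 2 (∑ i ∈ range (2 ^ j), x ^ i) + 1 = padicValNat 2 (x + 1) + j := by
  have hsub : padicValNat 2 (x - 1) = 1 := by
    rw [show x - 1 = 2 * ((x - 1) / 2) by omega, padicValNat.mul two_ne_zero (by omega),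
      padicValNat.self one_lt_two, padicValNat.eq_zero_of_not_dvd (by omega)]
  have hlte := padicValNat.pow_two_sub_one (x := x) (n := 2 ^ j) (by omega) (by omega)
    (by positivity) (Nat.even_pow.2 ⟨even_two, hj⟩)
  rw [← geom_sum_mul_of_one_le (by omega),
    padicValNat.mul (geom_sum_pos (Nat.zero_le x) (by positivity)).ne' (by omega), hsub,
    padicValNat.prime_pow] at hlte
  omega

theorem ZMod.geom_sum_two_pow_eq_zero_iff {k : ℕ} {a : ZMod (2 ^ k)} (ha : a.val % 4 = 3)
    {j : ℕ} (hj : j ≠ 0) :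
    ∑ i ∈ range (2 ^ j), a ^ i = 0 ↔ k + 1 ≤ padicValNat 2 (a.val + 1) + j := by
  have : NeZero (2 ^ k) := ⟨by positivity⟩
  have hcast : ∑ i ∈ range (2 ^ j), a ^ i =
      ((∑ i ∈ range (2 ^ j), a.val ^ i : ℕ) : ZMod (2 ^ k)) := by
    push_cast [ZMod.natCast_zmod_val]
    rfl
  have hval := padicValNat_geom_sum_two_pow ha hj
  rw [hcast, ZMod.natCast_eq_zero_iff,
    padicValNat_dvd_iff_le (geom_sum_pos (Nat.zero_le _) (by positivity)).ne']
  omega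

/-- For `k ≥ 3`, `a ≡ 3 (mod 4)` a unit of `ℤ/2^kℤ` and `b` odd, every point of
`ℤ/2^kℤ` lies on a cycle of `λ(a,b)` of length exactly `2^{k+1−v(a+1)}`. -/
theorem stmt11 (k : ℕ) (hk : 3 ≤ k) (a : (ZMod (2 ^ k))ˣ)
    (ha : ZMod.castHom
        (show (4 : ℕ) ∣ 2 ^ k by
          have h4 : (2 : ℕ) ^ 2 ∣ 2 ^ k := pow_dvd_pow 2 (by omega)
          norm_num at h4; exact h4)
        (ZMod 4) (a : ZMod (2 ^ k)) = 3)
    (b : ZMod (2 ^ k)) (hb : ¬ (2 : ZMod (2 ^ k)) ∣ b) :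
    ∀ x : ZMod (2 ^ k),
      Function.minimalPeriod (fun y => (affinePerm (2 ^ k) a b) y) x
        = 2 ^ (k + 1 - padicV 2 k ((a : ZMod (2 ^ k)) + 1)) := by
  intro x
  have : Fact (1 < 2 ^ k) := ⟨Nat.one_lt_two_pow (by omega)⟩
  have ha4 : (a : ZMod (2 ^ k)).val % 4 = 3 := by
    have := congrArg ZMod.val ha
    rwa [ZMod.castHom_apply, ← ZMod.natCast_val, ZMod.val_natCast] at this
  have hunit := isUnit_sub_one_mul_add (a := (a : ZMod (2 ^ k))) (by omega)
    (Nat.odd_iff.2 (by omega)) hb x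
  rw [padicV_add_one]
  set v := padicValNat 2 ((a : ZMod (2 ^ k)).val + 1)
  have hvk : v ≤ k := (Nat.pow_le_pow_iff_right one_lt_two).1
    ((Nat.le_of_dvd (by omega) pow_padicValNat_dvd).trans (ZMod.val_lt _))
  rw [show k + 1 - v = k - v + 1 by omega]
  refine Nat.eq_prime_pow_of_dvd_least_prime_pow Nat.prime_two ?_ ?_ <;>
    rw [← isPeriodicPt_iff_minimalPeriod_dvd, isPeriodicPt_affinePerm_iff hunit]
  · obtain hj | hj := eq_or_ne (k - v) 0
    · simp [hj]
    · rw [ZMod.geom_sum_two_pow_eq_zero_iff ha4 hj]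
      omega
  · rw [ZMod.geom_sum_two_pow_eq_zero_iff ha4 (by omega)]
    omega
end

section
/- Let p be a prime, k a positive integer, a ∈ (ℤ/p^kℤ)ˣ, and u, v ∈ ℤ/p^kℤ. The permutations λ(a,u) and λ(a,v) of ℤ/p^kℤ are conjugate in Hol(ℤ/p^kℤ) — i.e., there exist c ∈ (ℤ/p^kℤ)ˣ and z ∈ ℤ/p^kℤ with λ(c,z) ∘ λ(a,u) ∘ λ(c,z)⁻¹ = λ(a,v) — if and only if either both u and v lie in the subgroup (1−a)·(ℤ/p^kℤ), or u does not lie in (1−a)·(ℤ/p^kℤ) and u and v have the same additive order in ℤ/p^kℤ. -/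
namespace ZMod

theorem addOrderOf_units_mul {n : ℕ} (c : (ZMod n)ˣ) (x : ZMod n) :
    addOrderOf ((c : ZMod n) * x) = addOrderOf x :=
  AddEquiv.addOrderOf_eq (DistribMulAction.toAddEquiv (ZMod n) c) x

variable {p : ℕ} [hp : Fact p.Prime] {k : ℕ}

theorem exists_eq_pow_mul_unit (x : ZMod (p ^ k)) :
    ∃ m ≤ k, ∃ ε : (ZMod (p ^ k))ˣ, x = (p : ZMod (p ^ k)) ^ m * ε := by
  have : NeZero (p ^ k) := ⟨pow_ne_zero k hp.out.ne_zero⟩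
  rcases eq_or_ne x 0 with rfl | hx
  · exact ⟨k, le_rfl, 1, by rw [Units.val_one, mul_one, ← Nat.cast_pow, natCast_self]⟩
  obtain ⟨m, r, hpr, hval⟩ :=
    Nat.exists_eq_pow_mul_and_not_dvd ((val_ne_zero x).mpr hx) p hp.out.ne_one
  have hmk : m ≤ k := by
    have : p ^ m ≤ x.val := hval ▸ Nat.le_mul_of_pos_right _
      (Nat.pos_of_ne_zero fun h => hpr (h ▸ dvd_zero p))
    exact (Nat.pow_lt_pow_iff_right hp.out.one_lt).mp (this.trans_lt (val_lt x)) |>.le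
  have hr : r.Coprime (p ^ k) := ((hp.out.coprime_iff_not_dvd.mpr hpr).pow_left k).symm
  refine ⟨m, hmk, unitOfCoprime r hr, ?_⟩
  rw [coe_unitOfCoprime, ← natCast_zmod_val x, hval]
  push_cast
  rfl

theorem addOrderOf_pow_mul_unit {m : ℕ} (hmk : m ≤ k) (ε : (ZMod (p ^ k))ˣ) :
    addOrderOf ((p : ZMod (p ^ k)) ^ m * ε) = p ^ (k - m) := by
  rw [mul_comm, addOrderOf_units_mul, ← Nat.cast_pow,
    addOrderOf_coe _ (pow_ne_zero k hp.out.ne_zero), Nat.gcd_eq_right (pow_dvd_pow p hmk),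
    Nat.pow_div hmk hp.out.pos]

theorem exists_units_mul_eq_of_addOrderOf_eq {u v : ZMod (p ^ k)}
    (h : addOrderOf u = addOrderOf v) : ∃ c : (ZMod (p ^ k))ˣ, v = c * u := by
  obtain ⟨m, hmk, ε, rfl⟩ := exists_eq_pow_mul_unit u
  obtain ⟨n, hnk, δ, rfl⟩ := exists_eq_pow_mul_unit v
  rw [addOrderOf_pow_mul_unit hmk, addOrderOf_pow_mul_unit hnk] at h
  obtain rfl : m = n := by
    have := Nat.pow_right_injective hp.out.two_le h
    omega
  exact ⟨δ * ε⁻¹, by rw [Units.val_mul, mul_mul_mul_comm, Units.inv_mul, mul_one, mul_comm]⟩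

theorem dvd_or_dvd (x y : ZMod (p ^ k)) : x ∣ y ∨ y ∣ x := by
  suffices key : ∀ {m n : ℕ} (ε δ : (ZMod (p ^ k))ˣ), m ≤ n →
      (p : ZMod (p ^ k)) ^ m * ε ∣ (p : ZMod (p ^ k)) ^ n * δ by
    obtain ⟨m, -, ε, rfl⟩ := exists_eq_pow_mul_unit x
    obtain ⟨n, -, δ, rfl⟩ := exists_eq_pow_mul_unit y
    rcases le_total m n with h | h
    exacts [.inl (key ε δ h), .inr (key δ ε h)]
  intro m n ε δ h
  obtain ⟨d, rfl⟩ := Nat.exists_eq_add_of_le h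
  refine ⟨(p : ZMod (p ^ k)) ^ d * ↑(δ * ε⁻¹), ?_⟩
  rw [pow_add, Units.val_mul]
  linear_combination (-(p : ZMod (p ^ k)) ^ m * p ^ d * δ) * ε.mul_inv

theorem isNilpotent_of_not_isUnit {x : ZMod (p ^ k)} (hx : ¬IsUnit x) : IsNilpotent x := by
  obtain ⟨m, -, ε, rfl⟩ := exists_eq_pow_mul_unit x
  obtain _ | m := m
  · exact absurd (by simp) hx
  refine ⟨k, ?_⟩
  have hpk : (p : ZMod (p ^ k)) ^ k = 0 := by rw [← Nat.cast_pow, natCast_self]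
  rw [mul_pow, ← pow_mul, pow_eq_zero_of_le (Nat.le_mul_of_pos_left k m.succ_pos) hpk,
    zero_mul]

theorem addOrderOf_units_mul_add_of_not_dvd {s u : ZMod (p ^ k)} (hsu : ¬s ∣ u)
    (c : (ZMod (p ^ k))ˣ) (z : ZMod (p ^ k)) :
    addOrderOf (c * u + s * z) = addOrderOf u := by
  obtain ⟨t, rfl⟩ := (dvd_or_dvd s u).resolve_left hsu
  have ht : ¬IsUnit t := fun ⟨w, hw⟩ =>
    hsu ⟨↑w⁻¹, by rw [← hw, mul_assoc, Units.mul_inv, mul_one]⟩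
  have htz : IsNilpotent (t * z) :=
    (Commute.all t z).isNilpotent_mul_right (isNilpotent_of_not_isUnit ht)
  obtain ⟨w, hw⟩ : IsUnit ((c : ZMod (p ^ k)) + t * z) :=
    htz.isUnit_add_left_of_commute c.isUnit (.all _ _)
  rw [← addOrderOf_units_mul w u, hw]
  congr 1
  ring

end ZMod

theorem affinePerm_conj (m : ℕ) (a c : (ZMod m)ˣ) (u z : ZMod m) :
    affinePerm m c z * affinePerm m a u * (affinePerm m c z)⁻¹ =
      affinePerm m a (c * u + (1 - a) * z) := by
  rw [mul_inv_eq_iff_eq_mul]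
  ext x
  simp only [Equiv.Perm.mul_apply, affinePerm, Equiv.coe_fn_mk]
  ring

theorem affinePerm_right_inj (m : ℕ) (a : (ZMod m)ˣ) {u v : ZMod m} :
    affinePerm m a u = affinePerm m a v ↔ u = v :=
  ⟨fun h => by simpa [affinePerm] using congrArg (· 0) h, congrArg _⟩

theorem stmt15_general (p : ℕ) (hp : p.Prime) (k : ℕ)
    (a : (ZMod (p ^ k))ˣ) (u v : ZMod (p ^ k)) :
    (∃ (c : (ZMod (p ^ k))ˣ) (z : ZMod (p ^ k)),
        affinePerm (p ^ k) c z * affinePerm (p ^ k) a u * (affinePerm (p ^ k) c z)⁻¹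
          = affinePerm (p ^ k) a v)
      ↔ ((∃ y, u = (1 - (a : ZMod (p ^ k))) * y) ∧
            (∃ y, v = (1 - (a : ZMod (p ^ k))) * y))
        ∨ ((¬ ∃ y, u = (1 - (a : ZMod (p ^ k))) * y) ∧ addOrderOf u = addOrderOf v) := by
  have : Fact p.Prime := ⟨hp⟩
  change (∃ c z, _) ↔ (1 - (a : ZMod (p ^ k)) ∣ u ∧ _ ∣ v) ∨ (¬_ ∣ u ∧ _)
  simp only [affinePerm_conj, affinePerm_right_inj]
  constructor
  · rintro ⟨c, z, rfl⟩
    by_cases hsu : 1 - (a : ZMod (p ^ k)) ∣ u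
    · exact .inl ⟨hsu, (hsu.mul_left c).add (dvd_mul_right _ z)⟩
    · exact .inr ⟨hsu, (ZMod.addOrderOf_units_mul_add_of_not_dvd hsu c z).symm⟩
  · rintro (⟨⟨y, rfl⟩, ⟨y', rfl⟩⟩ | ⟨-, hord⟩)
    · exact ⟨1, y' - y, by rw [Units.val_one]; ring⟩
    · obtain ⟨c, rfl⟩ := ZMod.exists_units_mul_eq_of_addOrderOf_eq hord
      exact ⟨c, 0, by ring⟩

/-- `λ(a,u)` and `λ(a,v)` are conjugate in `Hol(ℤ/p^kℤ)` if and only if either both `u`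
and `v` lie in the subgroup `(1−a)·(ℤ/p^kℤ)`, or `u` does not lie in that subgroup and
`u` and `v` have the same additive order. -/
theorem stmt15 (p : ℕ) (hp : p.Prime) (k : ℕ) (hk : 0 < k)
    (a : (ZMod (p ^ k))ˣ) (u v : ZMod (p ^ k)) :
    (∃ (c : (ZMod (p ^ k))ˣ) (z : ZMod (p ^ k)),
        affinePerm (p ^ k) c z * affinePerm (p ^ k) a u * (affinePerm (p ^ k) c z)⁻¹
          = affinePerm (p ^ k) a v)
      ↔ ((∃ y, u = (1 - (a : ZMod (p ^ k))) * y) ∧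
            (∃ y, v = (1 - (a : ZMod (p ^ k))) * y))
        ∨ ((¬ ∃ y, u = (1 - (a : ZMod (p ^ k))) * y) ∧ addOrderOf u = addOrderOf v) :=
  stmt15_general p hp k a u v
end

section
/- Let p be an odd prime and k a positive integer. If σ = λ(a,b) is an element of Hol(ℤ/p^kℤ) with σ ∘ σ = id, then either σ = id or σ is conjugate in Hol(ℤ/p^kℤ) to the negation map λ(−1,0) : x ↦ −x; moreover σ cannot be conjugate to both (id and x ↦ −x are distinct and id is not conjugate to any other element). Hence Hol(ℤ/p^kℤ) has exactly two conjugacy classes of elements of square the identity, represented by λ(1,0) and λ(−1,0). -/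
theorem IsLocalRing.eq_one_or_eq_neg_one_of_mul_self_eq_one {R : Type*} [CommRing R]
    [IsLocalRing R] (h2 : IsUnit (2 : R)) {a : R} (ha : a * a = 1) : a = 1 ∨ a = -1 := by
  have hprod : (a - 1) * (a + 1) = 0 := by linear_combination ha
  have hsum : IsUnit ((a + 1) + (1 - a)) := by convert h2 using 1; ring
  rcases IsLocalRing.isUnit_or_isUnit_of_isUnit_add hsum with hu | hu
  · exact .inl (sub_eq_zero.mp (hu.mul_left_eq_zero.mp hprod))
  · refine .inr (eq_neg_of_add_eq_zero_left (hu.neg.mul_right_eq_zero.mp ?_))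
    linear_combination hprod

theorem Units.neg_one_ne_one_of_isUnit_two {R : Type*} [Ring R] [Nontrivial R]
    (h2 : IsUnit (2 : R)) : (-1 : Rˣ) ≠ 1 := by
  intro h
  have h' := congrArg Units.val h
  rw [Units.val_neg, Units.val_one] at h'
  have h20 : (2 : R) = 0 := by
    rw [← one_add_one_eq_two]
    nth_rw 1 [← h']
    exact neg_add_cancel 1
  exact not_isUnit_zero (h20 ▸ h2)

theorem ZMod.isUnit_two_of_odd {n : ℕ} (hn : Odd n) : IsUnit (2 : ZMod n) := by
  exact_mod_cast (ZMod.unitOfCoprime 2 (Nat.coprime_two_left.mpr hn)).isUnit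

theorem ZMod.isLocalRing_prime_pow (p : ℕ) [Fact p.Prime] {k : ℕ} (hk : 0 < k) :
    IsLocalRing (ZMod (p ^ k)) :=
  have : Fact (1 < p ^ k) := ⟨Nat.one_lt_pow hk.ne' (Fact.out : p.Prime).one_lt⟩
  .of_surjective' (PadicInt.toZModPow k) (ZMod.ringHom_surjective _)

namespace affinePerm

variable {m : ℕ}

@[simp]
theorem apply (a : (ZMod m)ˣ) (b x : ZMod m) : affinePerm m a b x = a * x + b := rfl

theorem one_zero : affinePerm m 1 0 = 1 := by
  ext x
  simp

theorem mul (a c : (ZMod m)ˣ) (b d : ZMod m) :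
    affinePerm m a b * affinePerm m c d = affinePerm m (a * c) (a * d + b) := by
  ext x
  simp only [Equiv.Perm.mul_apply, apply, Units.val_mul]
  ring

theorem inv (a : (ZMod m)ˣ) (b : ZMod m) :
    (affinePerm m a b)⁻¹ = affinePerm m a⁻¹ (-(a⁻¹ * b)) := by
  rw [inv_eq_iff_mul_eq_one, mul, mul_inv_cancel, mul_neg, Units.mul_inv_cancel_left,
    neg_add_cancel, one_zero]

theorem inj {a c : (ZMod m)ˣ} {b d : ZMod m} :
    affinePerm m a b = affinePerm m c d ↔ a = c ∧ b = d := by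
  refine ⟨fun h ↦ ?_, fun ⟨hac, hbd⟩ ↦ hac ▸ hbd ▸ rfl⟩
  have h0 := congr($h 0)
  have h1 := congr($h 1)
  simp only [apply, mul_zero, zero_add, mul_one] at h0 h1
  exact ⟨Units.ext (by linear_combination h1 - h0), h0⟩

theorem conj (a c : (ZMod m)ˣ) (b z : ZMod m) :
    affinePerm m c z * affinePerm m a b * (affinePerm m c z)⁻¹
      = affinePerm m a (c * b + (1 - a) * z) := by
  ext x
  simp only [inv, Equiv.Perm.mul_apply, apply]
  linear_combination (a * x - a * z) * (Units.mul_inv c)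

theorem mul_self_eq_one_iff {a : (ZMod m)ˣ} {b : ZMod m} :
    affinePerm m a b * affinePerm m a b = 1 ↔ a * a = 1 ∧ ((a : ZMod m) + 1) * b = 0 := by
  rw [mul, ← one_zero, inj]
  exact and_congr_right fun _ ↦ by constructor <;> intro h <;> linear_combination h

theorem mul_self_eq_one_xor_conj_neg [IsLocalRing (ZMod m)] (h2 : IsUnit (2 : ZMod m))
    {a : (ZMod m)ˣ} {b : ZMod m} (h : affinePerm m a b * affinePerm m a b = 1) :
    Xor' (affinePerm m a b = 1)
      (∃ (c : (ZMod m)ˣ) (z : ZMod m),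
        affinePerm m c z * affinePerm m a b * (affinePerm m c z)⁻¹ = affinePerm m (-1) 0) := by
  obtain ⟨haa, hb⟩ := mul_self_eq_one_iff.mp h
  have hneg := Units.neg_one_ne_one_of_isUnit_two h2
  have haa' : (a : ZMod m) * a = 1 := by rw [← Units.val_mul, haa, Units.val_one]
  obtain rfl | rfl : a = 1 ∨ a = -1 :=
    (IsLocalRing.eq_one_or_eq_neg_one_of_mul_self_eq_one h2 haa').imp
      (fun ha ↦ Units.ext (by rw [ha, Units.val_one]))
      (fun ha ↦ Units.ext (by rw [ha, Units.val_neg, Units.val_one]))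
  · rw [Units.val_one] at hb
    have hb0 : b = 0 := h2.mul_right_eq_zero.mp (by linear_combination hb)
    subst hb0
    refine .inl ⟨one_zero, fun ⟨c, z, hcz⟩ ↦ hneg ?_⟩
    rw [conj, inj] at hcz
    exact hcz.1.symm
  · refine .inr ⟨⟨1, -(b * ↑h2.unit⁻¹), ?_⟩, fun h1 ↦ hneg ?_⟩
    · rw [conj, inj]
      refine ⟨rfl, ?_⟩
      simp only [Units.val_one, Units.val_neg, one_mul]
      linear_combination (-b) * h2.mul_val_inv
    · rw [← one_zero, inj] at h1
      exact h1.1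

end affinePerm

/-- For an odd prime `p`: any `σ = λ(a,b)` in `Hol(ℤ/p^kℤ)` with `σ ∘ σ = id` is either
the identity, or conjugate in `Hol(ℤ/p^kℤ)` to the negation map `λ(−1,0)` — and exactly
one of these two alternatives holds. -/
theorem stmt16 (p : ℕ) (hp : p.Prime) (hodd : Odd p) (k : ℕ) (hk : 0 < k)
    (a : (ZMod (p ^ k))ˣ) (b : ZMod (p ^ k))
    (h2 : affinePerm (p ^ k) a b * affinePerm (p ^ k) a b = 1) :
    Xor' (affinePerm (p ^ k) a b = 1)
      (∃ (c : (ZMod (p ^ k))ˣ) (z : ZMod (p ^ k)),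
        affinePerm (p ^ k) c z * affinePerm (p ^ k) a b * (affinePerm (p ^ k) c z)⁻¹
          = affinePerm (p ^ k) (-1) 0) := by
  have : Fact p.Prime := ⟨hp⟩
  have := ZMod.isLocalRing_prime_pow p hk
  exact affinePerm.mul_self_eq_one_xor_conj_neg (ZMod.isUnit_two_of_odd hodd.pow) h2
end

section
/- Let Ω be a finite nonempty set with n := |Ω|, d a positive integer, ψ a permutation of {0,…,d−1}, g_0,…,g_{d−1} permutations of Ω, and w := w(ψ,g). Then w is a (d·n)-cycle on Ω × {0,…,d−1} (i.e., some — equivalently, every — point has w-orbit of size d·n) if and only if ψ is a d-cycle on {0,…,d−1} (some point has ψ-orbit of size d) and the forward cycle product h := g_{ψ^d(0)} ∘ g_{ψ^{d−1}(0)} ∘ ⋯ ∘ g_{ψ(0)} is an n-cycle on Ω (some point has h-orbit of size n). (Note that when ψ is a d-cycle, ψ^d(0) = 0 and w^d(x,0) = (h(x),0) for all x ∈ Ω.) -/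
/-!
Since `w^k (x, i) = (g_{ψ^k(i)} ⋯ g_{ψ(i)} x, ψ^k(i))`, the point `(x, i)` returns to itself
exactly at the multiples of `p q`, where `p` is the `ψ`-period of `i` and `q` the period of `x`
under the return map `g_{ψ^p(i)} ⋯ g_{ψ(i)}`. A point whose period is the size of a finite set
has the whole set in its orbit, so then every point has that period; hence we may work at
`i = 0`, where `p ≤ d`, `q ≤ n` and `p q = d n` force `p = d` and `q = n`, and the return map
is `h`.
-/

open Function Equiv

namespace Function

variable {α : Type*} [Fintype α] {f : α → α} {x : α}

theorem exists_iterate_eq_of_minimalPeriod_eq_card (h : minimalPeriod f x = Fintype.card α)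
    (y : α) : ∃ n, f^[n] x = y := by
  classical
  have hinj : Set.InjOn (f^[·] x) (Finset.range (Fintype.card α)) := by
    simpa [← h] using iterate_injOn_Iio_minimalPeriod (f := f) (x := x)
  have hcover : (Finset.range (Fintype.card α)).image (f^[·] x) = Finset.univ :=
    Finset.eq_univ_of_card _ (by rw [Finset.card_image_of_injOn hinj, Finset.card_range])
  obtain ⟨n, -, hn⟩ := Finset.mem_image.mp (hcover ▸ Finset.mem_univ y)
  exact ⟨n, hn⟩

theorem minimalPeriod_eq_card_of_minimalPeriod_eq_card (h : minimalPeriod f x = Fintype.card α)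
    (y : α) : minimalPeriod f y = Fintype.card α := by
  obtain ⟨n, rfl⟩ := exists_iterate_eq_of_minimalPeriod_eq_card h y
  have hx : x ∈ periodicPts f :=
    minimalPeriod_pos_iff_mem_periodicPts.mp (h ▸ Fintype.card_pos_iff.mpr ⟨x⟩)
  rw [minimalPeriod_apply_iterate hx, h]

end Function

namespace Wreath

variable {Ω : Type*} {d : ℕ} (ψ : Perm (Fin d)) (g : Fin d → Perm Ω)

/-- `g_{ψ^k(i)} * ⋯ * g_{ψ(i)}`; for `k = d` and `i = 0` this is the `h` of the theorem. -/
def forwardProduct (k : ℕ) (i : Fin d) : Perm Ω :=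
  ((List.range k).map (fun j => g ((ψ ^ (k - j)) i))).prod

@[simp]
theorem forwardProduct_zero (i : Fin d) : forwardProduct ψ g 0 i = 1 := rfl

theorem forwardProduct_succ (k : ℕ) (i : Fin d) :
    forwardProduct ψ g (k + 1) i = g ((ψ ^ (k + 1)) i) * forwardProduct ψ g k i := by
  simp [forwardProduct, List.range_succ_eq_map, Function.comp_def]

theorem forwardProduct_add (a b : ℕ) (i : Fin d) :
    forwardProduct ψ g (a + b) i = forwardProduct ψ g a ((ψ ^ b) i) * forwardProduct ψ g b i := by
  induction a with
  | zero => simp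
  | succ a ih =>
    rw [Nat.add_right_comm, forwardProduct_succ, ih, forwardProduct_succ, mul_assoc,
      ← Perm.mul_apply, ← pow_add, Nat.add_right_comm]

theorem forwardProduct_mul_of_pow_apply_eq {p : ℕ} {i : Fin d} (hp : (ψ ^ p) i = i) (k : ℕ) :
    forwardProduct ψ g (p * k) i = forwardProduct ψ g p i ^ k := by
  induction k with
  | zero => simp
  | succ k ih => rw [Nat.mul_succ, forwardProduct_add, hp, ih, pow_succ]

theorem wreath_pow_apply (k : ℕ) (x : Ω) (i : Fin d) :
    (wreath d ψ g ^ k) (x, i) = (forwardProduct ψ g k i x, (ψ ^ k) i) := by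
  induction k with
  | zero => simp
  | succ k ih =>
    rw [pow_succ', Perm.mul_apply, ih, forwardProduct_succ, pow_succ' ψ]
    rfl

theorem minimalPeriod_wreath (x : Ω) (i : Fin d) :
    minimalPeriod (wreath d ψ g) (x, i) = minimalPeriod ψ i *
      minimalPeriod (forwardProduct ψ g (minimalPeriod ψ i) i) x := by
  set p := minimalPeriod ψ i
  have hp : (ψ ^ p) i = i := isPeriodicPt_minimalPeriod ψ i
  refine eq_of_forall_dvd fun m => ?_
  rw [← isPeriodicPt_iff_minimalPeriod_dvd, IsPeriodicPt, IsFixedPt, Perm.iterate_eq_pow,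
    wreath_pow_apply, Prod.ext_iff]
  constructor
  · rintro ⟨hx, hi⟩
    obtain ⟨k, rfl⟩ := isPeriodicPt_iff_minimalPeriod_dvd.mp hi
    rw [forwardProduct_mul_of_pow_apply_eq ψ g hp] at hx
    exact mul_dvd_mul_left p (isPeriodicPt_iff_minimalPeriod_dvd.mp hx)
  · rintro ⟨k, rfl⟩
    refine ⟨?_, isPeriodicPt_iff_minimalPeriod_dvd.mpr ((dvd_mul_right p _).mul_right k)⟩
    rw [mul_assoc, forwardProduct_mul_of_pow_apply_eq ψ g hp]
    exact (isPeriodicPt_minimalPeriod _ x).mul_const k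

end Wreath

open Wreath

theorem stmt17_general {Ω : Type*} [Fintype Ω] (d : ℕ) (hd : 0 < d)
    (ψ : Equiv.Perm (Fin d)) (g : Fin d → Equiv.Perm Ω)
    (h : Equiv.Perm Ω)
    (hh : h = ((List.range d).map (fun j => g ((ψ ^ (d - j)) ⟨0, hd⟩))).prod) :
    (∃ q : Ω × Fin d,
        Function.minimalPeriod (fun y => (wreath d ψ g) y) q = d * Fintype.card Ω)
      ↔ ((∃ i : Fin d, Function.minimalPeriod (fun j => ψ j) i = d)
          ∧ (∃ x : Ω, Function.minimalPeriod (fun y => h y) x = Fintype.card Ω)) := by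
  set o : Fin d := ⟨0, hd⟩
  change h = forwardProduct ψ g d o at hh
  subst hh
  constructor
  · rintro ⟨⟨x, i⟩, hw⟩
    have hcard : d * Fintype.card Ω = Fintype.card (Ω × Fin d) := by simp [mul_comm]
    have hw₀ : minimalPeriod (wreath d ψ g) (x, o) = d * Fintype.card Ω :=
      (minimalPeriod_eq_card_of_minimalPeriod_eq_card (hw.trans hcard) _).trans hcard.symm
    rw [minimalPeriod_wreath] at hw₀
    have hψ : minimalPeriod ψ o ≤ d := minimalPeriod_le_card.trans_eq (Fintype.card_fin d)
    obtain ⟨hψo, hx⟩ := (mul_eq_mul_iff_eq_and_eq_of_pos hψ minimalPeriod_le_card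
      (minimalPeriod_pos_of_mem_periodicPts (ψ.injective.mem_periodicPts o))
      (Fintype.card_pos_iff.mpr ⟨x⟩)).mp hw₀
    rw [hψo] at hx
    exact ⟨⟨o, hψo⟩, ⟨x, hx⟩⟩
  · rintro ⟨⟨i, hi⟩, ⟨x, hx⟩⟩
    have hψo : minimalPeriod ψ o = d :=
      (minimalPeriod_eq_card_of_minimalPeriod_eq_card (hi.trans (Fintype.card_fin d).symm) o).trans
        (Fintype.card_fin d)
    refine ⟨(x, o), ?_⟩
    change minimalPeriod (wreath d ψ g) (x, o) = _
    rw [minimalPeriod_wreath, hψo]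
    exact congrArg (d * ·) hx

/-- `w(ψ,g)` is a `(d·n)`-cycle on `Ω × {0,…,d−1}` (where `n = |Ω|`), i.e. some point has
orbit of size `d·n`, if and only if `ψ` is a `d`-cycle (some point has `ψ`-orbit of size
`d`) and the forward cycle product `h = g_{ψ^d(0)} ∘ g_{ψ^{d−1}(0)} ∘ ⋯ ∘ g_{ψ(0)}` is an
`n`-cycle on `Ω` (some point has `h`-orbit of size `n`). -/
theorem stmt17 {Ω : Type*} [Fintype Ω] [Nonempty Ω] (d : ℕ) (hd : 0 < d)
    (ψ : Equiv.Perm (Fin d)) (g : Fin d → Equiv.Perm Ω)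
    (h : Equiv.Perm Ω)
    (hh : h = ((List.range d).map (fun j => g ((ψ ^ (d - j)) ⟨0, hd⟩))).prod) :
    (∃ q : Ω × Fin d,
        Function.minimalPeriod (fun y => (wreath d ψ g) y) q = d * Fintype.card Ω)
      ↔ ((∃ i : Fin d, Function.minimalPeriod (fun j => ψ j) i = d)
          ∧ (∃ x : Ω, Function.minimalPeriod (fun y => h y) x = Fintype.card Ω)) :=
  stmt17_general d hd ψ g h hh
end
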